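/- arXiv:math/9909191 — 3 statements merged into one kernel-verified Lean document; each statement's English description precedes it below -/
import Mathlib

section
/- Let P and Q be bounded subsets of a Hadamard space Y with Hausdorff distance Hd(P,Q) = h, and let τ_P and τ_Q denote their circumradii. Then the circumcenters satisfy d(⋆(P), ⋆(Q)) ≤ √(h(τ_P + τ_Q + h))·√2, i.e. d(⋆(P),⋆(Q))² ≤ 2h(τ_P + τ_Q + h). -/
open Metric Set

section Defs

variable {X : Type*} [MetricSpace X]

/-- `γ` is a unit-speed geodesic on the parameter set `s`. -/
def IsGeodesicOn (γ : ℝ → X) (s : Set ℝ) : Prop :=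
  ∀ a ∈ s, ∀ b ∈ s, dist (γ a) (γ b) = |a - b|

/-- `γ` is a unit-speed geodesic segment from `x` to `y`, on `[0, dist x y]`. -/
def IsGeodesicFromTo (γ : ℝ → X) (x y : X) : Prop :=
  γ 0 = x ∧ γ (dist x y) = y ∧ IsGeodesicOn γ (Set.Icc 0 (dist x y))

/-- A geodesic metric space: any two points are joined by a geodesic segment. -/
def GeodesicSpace (X : Type*) [MetricSpace X] : Prop :=
  ∀ x y : X, ∃ γ : ℝ → X, IsGeodesicFromTo γ x y

/-- A CAT(0) space: a geodesic space in which every geodesic triangle satisfies the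
comparison inequality (distance from a vertex to a point on the opposite side is at most
the corresponding distance in a Euclidean comparison triangle). -/
def CAT0 (X : Type*) [MetricSpace X] : Prop :=
  GeodesicSpace X ∧
    ∀ (x y : X) (γ : ℝ → X), IsGeodesicFromTo γ x y →
      ∀ t ∈ Set.Icc (0:ℝ) 1, ∀ p : X,
        dist p (γ (t * dist x y)) ^ 2 ≤
          (1 - t) * dist p x ^ 2 + t * dist p y ^ 2 - t * (1 - t) * dist x y ^ 2

/-- A Hadamard space: a complete CAT(0) geodesic space. -/
def Hadamard (X : Type*) [MetricSpace X] : Prop := CompleteSpace X ∧ CAT0 X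

end Defs

section Circum

variable {X : Type*} [MetricSpace X]

/-- The circumradius of a subset: the infimum of radii of closed balls containing it. -/
noncomputable def circumradius (Q : Set X) : ℝ :=
  sInf {r : ℝ | 0 ≤ r ∧ ∃ y : X, Q ⊆ Metric.closedBall y r}

/-- `c` is a circumcenter of `Q`: `Q` is contained in the closed ball of radius
`circumradius Q` about `c`. -/
def IsCircumcenter (Q : Set X) (c : X) : Prop :=
  Q ⊆ Metric.closedBall c (circumradius Q)

end Circum

/-- Let `P` and `Q` be bounded subsets of a Hadamard space `Y` with Hausdorff
distance `h`, and let `τ_P`, `τ_Q` be their circumradii. Then the circumcenters satisfy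
`d(⋆P, ⋆Q)² ≤ 2h(τ_P + τ_Q + h)`. -/
theorem circumcenter_hausdorff_estimate {Y : Type*} [MetricSpace Y] (hY : Hadamard Y)
    (P Q : Set Y) (hPne : P.Nonempty) (hQne : Q.Nonempty)
    (hPb : Bornology.IsBounded P) (hQb : Bornology.IsBounded Q)
    (x y : Y) (hx : IsCircumcenter P x) (hy : IsCircumcenter Q y) :
    dist x y ^ 2 ≤
      2 * Metric.hausdorffDist P Q *
        (circumradius P + circumradius Q + Metric.hausdorffDist P Q) := by
  obtain ⟨_, hGeo, hCAT⟩ := hY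
  set h := Metric.hausdorffDist P Q with hh
  have hne : EMetric.hausdorffEdist P Q ≠ ⊤ :=
    Metric.hausdorffEdist_ne_top_of_nonempty_of_bounded hPne hQne hPb hQb
  have hne' : EMetric.hausdorffEdist Q P ≠ ⊤ := by unfold EMetric.hausdorffEdist at hne ⊢; rwa [EMetric.hausdorffEdist_comm]
  have hh0 : 0 ≤ h := Metric.hausdorffDist_nonneg
  set τP := circumradius P with hτP
  set τQ := circumradius Q with hτQ
  have hbddP : BddBelow {r : ℝ | 0 ≤ r ∧ ∃ z : Y, P ⊆ Metric.closedBall z r} :=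
    ⟨0, fun r hr => hr.1⟩
  have hbddQ : BddBelow {r : ℝ | 0 ≤ r ∧ ∃ z : Y, Q ⊆ Metric.closedBall z r} :=
    ⟨0, fun r hr => hr.1⟩
  have hτP0 : 0 ≤ τP := by
    obtain ⟨p₀, hp₀⟩ := hPne
    have := hx hp₀
    simp only [Metric.mem_closedBall] at this
    exact le_trans dist_nonneg this
  have hτQ0 : 0 ≤ τQ := by
    obtain ⟨q₀, hq₀⟩ := hQne
    have := hy hq₀
    simp only [Metric.mem_closedBall] at this
    exact le_trans dist_nonneg this
  obtain ⟨γ, hγ⟩ := hGeo x y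
  set m := γ ((1/2) * dist x y) with hm
  have hcomp : ∀ p : Y, dist p m ^ 2 ≤
      (1 - 1/2) * dist p x ^ 2 + (1/2) * dist p y ^ 2 -
        (1/2) * (1 - 1/2) * dist x y ^ 2 :=
    fun p => hCAT x y γ hγ (1/2) ⟨by norm_num, by norm_num⟩ p
  -- bound dist p y for p ∈ P
  have hPy : ∀ p ∈ P, dist p y ≤ τQ + h := by
    intro p hp
    have h1 : Metric.infDist p Q ≤ h := Metric.infDist_le_hausdorffDist_of_mem hp hne
    refine le_of_forall_pos_le_add fun ε hε => ?_
    have : Metric.infDist p Q < Metric.infDist p Q + ε := by linarith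
    obtain ⟨q, hq, hdq⟩ := (Metric.infDist_lt_iff hQne).1 this
    have hqy : dist q y ≤ τQ := by
      have := hy hq; simpa [Metric.mem_closedBall] using this
    calc dist p y ≤ dist p q + dist q y := dist_triangle _ _ _
      _ ≤ (Metric.infDist p Q + ε) + τQ := by linarith
      _ ≤ τQ + h + ε := by linarith
  have hQx : ∀ q ∈ Q, dist q x ≤ τP + h := by
    intro q hq
    have h1 : Metric.infDist q P ≤ h := by
      have := Metric.infDist_le_hausdorffDist_of_mem hq hne'
      rwa [Metric.hausdorffDist_comm] at this
    refine le_of_forall_pos_le_add fun ε hε => ?_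
    have : Metric.infDist q P < Metric.infDist q P + ε := by linarith
    obtain ⟨p, hp, hdp⟩ := (Metric.infDist_lt_iff hPne).1 this
    have hpx : dist p x ≤ τP := by
      have := hx hp; simpa [Metric.mem_closedBall] using this
    calc dist q x ≤ dist q p + dist p x := dist_triangle _ _ _
      _ ≤ (Metric.infDist q P + ε) + τP := by linarith
      _ ≤ τP + h + ε := by linarith
  set A : ℝ := (1/2) * τP ^ 2 + (1/2) * (τQ + h) ^ 2 - (1/4) * dist x y ^ 2 with hA
  set B : ℝ := (1/2) * (τP + h) ^ 2 + (1/2) * τQ ^ 2 - (1/4) * dist x y ^ 2 with hB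
  have hPm : ∀ p ∈ P, dist p m ^ 2 ≤ A := by
    intro p hp
    have h1 := hcomp p
    have h2 : dist p x ≤ τP := by
      have := hx hp; simpa [Metric.mem_closedBall] using this
    have h3 : dist p y ≤ τQ + h := hPy p hp
    have h2' : dist p x ^ 2 ≤ τP ^ 2 := pow_le_pow_left₀ dist_nonneg h2 2
    have h3' : dist p y ^ 2 ≤ (τQ + h) ^ 2 := pow_le_pow_left₀ dist_nonneg h3 2
    rw [hA]; nlinarith
  have hQm : ∀ q ∈ Q, dist q m ^ 2 ≤ B := by
    intro q hq
    have h1 := hcomp q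
    have h2 : dist q y ≤ τQ := by
      have := hy hq; simpa [Metric.mem_closedBall] using this
    have h3 : dist q x ≤ τP + h := hQx q hq
    have h2' : dist q y ^ 2 ≤ τQ ^ 2 := pow_le_pow_left₀ dist_nonneg h2 2
    have h3' : dist q x ^ 2 ≤ (τP + h) ^ 2 := pow_le_pow_left₀ dist_nonneg h3 2
    rw [hB]; nlinarith
  have hA0 : 0 ≤ A := by
    obtain ⟨p₀, hp₀⟩ := hPne
    exact le_trans (sq_nonneg _) (hPm p₀ hp₀)
  have hB0 : 0 ≤ B := by
    obtain ⟨q₀, hq₀⟩ := hQne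
    exact le_trans (sq_nonneg _) (hQm q₀ hq₀)
  have hτPA : τP ^ 2 ≤ A := by
    have hle : τP ≤ Real.sqrt A := by
      refine csInf_le hbddP ⟨Real.sqrt_nonneg _, m, fun p hp => ?_⟩
      simp only [Metric.mem_closedBall]
      exact (Real.le_sqrt dist_nonneg hA0).2 (by simpa [Real.sq_sqrt hA0] using hPm p hp)
    exact (Real.le_sqrt hτP0 hA0).1 hle
  have hτQB : τQ ^ 2 ≤ B := by
    have hle : τQ ≤ Real.sqrt B := by
      refine csInf_le hbddQ ⟨Real.sqrt_nonneg _, m, fun q hq => ?_⟩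
      simp only [Metric.mem_closedBall]
      exact (Real.le_sqrt dist_nonneg hB0).2 (by simpa [Real.sq_sqrt hB0] using hQm q hq)
    exact (Real.le_sqrt hτQ0 hB0).1 hle
  rw [hA] at hτPA
  rw [hB] at hτQB
  nlinarith [hτPA, hτQB]
end

section
/- In a Hadamard space, if P is contained in the closed ball of radius τ_P about x and in the closed ball of radius τ_Q + h about y, and τ_P is the circumradius of P with circumcenter x, then d(x,y)² ≤ 2τ_Q² − 2τ_P² + 4τ_Q h + 2h². -/
open Metric Set

/-!
The CAT(0) inequality at the midpoint `m` of `[x, y]` puts every point of `P` within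
squared distance `τP² / 2 + (τQ + h)² / 2 - d(x, y)² / 4` of `m`; since no ball about `m`
containing `P` is smaller than the circumradius, this quantity is at least `τP²`.
-/

section Circumradius

variable {X : Type*} [MetricSpace X]

lemma circumradius_nonneg (Q : Set X) : 0 ≤ circumradius Q :=
  Real.sInf_nonneg fun _ hr => hr.1

lemma circumradius_le_of_subset_closedBall {Q : Set X} {c : X} {r : ℝ} (hr : 0 ≤ r)
    (hQ : Q ⊆ closedBall c r) : circumradius Q ≤ r :=
  csInf_le ⟨0, fun _ hs => hs.1⟩ ⟨hr, c, hQ⟩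

lemma circumradius_sq_le_of_forall_dist_sq_le {Q : Set X} (hQ : Q.Nonempty) {c : X} {v : ℝ}
    (hv : ∀ p ∈ Q, dist p c ^ 2 ≤ v) : circumradius Q ^ 2 ≤ v := by
  obtain ⟨p, hp⟩ := hQ
  have hv₀ : 0 ≤ v := (sq_nonneg _).trans (hv p hp)
  have hball : Q ⊆ closedBall c √v := fun q hq => Real.le_sqrt_of_sq_le (hv q hq)
  exact (Real.le_sqrt (circumradius_nonneg Q) hv₀).1
    (circumradius_le_of_subset_closedBall (Real.sqrt_nonneg v) hball)

theorem CAT0.exists_midpoint_dist_sq_le (hX : CAT0 X) (x y : X) :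
    ∃ m : X, ∀ p : X,
      dist p m ^ 2 ≤ dist p x ^ 2 / 2 + dist p y ^ 2 / 2 - dist x y ^ 2 / 4 := by
  obtain ⟨γ, hγ⟩ := hX.1 x y
  refine ⟨γ (1 / 2 * dist x y), fun p => ?_⟩
  have hcmp := hX.2 x y γ hγ (1 / 2) (by norm_num) p
  linarith

theorem CAT0.circumradius_sq_le (hX : CAT0 X) {Q : Set X} (hQ : Q.Nonempty) {x y : X}
    {r s : ℝ} (hx : Q ⊆ closedBall x r) (hy : Q ⊆ closedBall y s) :
    circumradius Q ^ 2 ≤ r ^ 2 / 2 + s ^ 2 / 2 - dist x y ^ 2 / 4 := by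
  obtain ⟨m, hm⟩ := hX.exists_midpoint_dist_sq_le x y
  refine circumradius_sq_le_of_forall_dist_sq_le hQ (c := m) fun p hp => ?_
  have hpx : dist p x ^ 2 ≤ r ^ 2 := pow_le_pow_left₀ dist_nonneg (hx hp) 2
  have hpy : dist p y ^ 2 ≤ s ^ 2 := pow_le_pow_left₀ dist_nonneg (hy hp) 2
  linarith [hm p]

end Circumradius

theorem circumcenter_displacement_bound_general {X : Type*} [MetricSpace X] (hX : Hadamard X)
    (P : Set X) (hPne : P.Nonempty) (x y : X) (τP τQ h : ℝ)
    (hPx : P ⊆ Metric.closedBall x τP)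
    (hPy : P ⊆ Metric.closedBall y (τQ + h))
    (hτP : τP = circumradius P) :
    dist x y ^ 2 ≤ 2 * τQ ^ 2 - 2 * τP ^ 2 + 4 * τQ * h + 2 * h ^ 2 := by
  have hmid := hX.2.circumradius_sq_le hPne hPx hPy
  rw [← hτP] at hmid
  linarith

/-- In a Hadamard space, if `P` is contained in the closed ball of radius `τP`
about `x` and in the closed ball of radius `τQ + h` about `y`, and `τP` is the circumradius
of `P` with circumcenter `x`, then `d(x,y)² ≤ 2τQ² − 2τP² + 4τQh + 2h²`. -/
theorem circumcenter_displacement_bound {X : Type*} [MetricSpace X] (hX : Hadamard X)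
    (P : Set X) (hPne : P.Nonempty) (x y : X) (τP τQ h : ℝ)
    (hτQ : 0 ≤ τQ) (hh : 0 ≤ h)
    (hPx : P ⊆ Metric.closedBall x τP)
    (hPy : P ⊆ Metric.closedBall y (τQ + h))
    (hτP : τP = circumradius P) (hcen : IsCircumcenter P x) :
    dist x y ^ 2 ≤ 2 * τQ ^ 2 - 2 * τP ^ 2 + 4 * τQ * h + 2 * h ^ 2 :=
  circumcenter_displacement_bound_general hX P hPne x y τP τQ h hPx hPy hτP
end

section
/- Let X be a geodesically complete Hadamard space, let P ⊆ X be the (nonempty) closed convex union of all geodesic lines parallel to a given geodesic line c, and suppose X is contained in the R-neighborhood of P for some R > 0. Then X = P, and consequently X splits isometrically as ℝ × X′. -/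
open Metric Set

section Rays

variable {X : Type*} [MetricSpace X]

/-- A unit speed geodesic ray, parameterized on `[0, ∞)`. -/
def IsRay (γ : ℝ → X) : Prop := IsGeodesicOn γ (Set.Ici 0)

/-- A unit speed geodesic line, parameterized on all of `ℝ`. -/
def IsLine (γ : ℝ → X) : Prop := IsGeodesicOn γ Set.univ

/-- Two rays are asymptotic (determine the same ideal boundary point) if they remain at
uniformly bounded distance. -/
def Asymptotic (γ σ : ℝ → X) : Prop := ∃ C : ℝ, ∀ t : ℝ, 0 ≤ t → dist (γ t) (σ t) ≤ C

end Rays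

/-- A space is geodesically complete if every geodesic segment extends to a geodesic line. -/
def GeodesicallyComplete (X : Type*) [MetricSpace X] : Prop :=
  ∀ (γ : ℝ → X) (a b : ℝ), a ≤ b → IsGeodesicOn γ (Set.Icc a b) →
    ∃ ℓ : ℝ → X, IsGeodesicOn ℓ Set.univ ∧ Set.EqOn ℓ γ (Set.Icc a b)

namespace Strip
variable {X : Type*} [MetricSpace X]

lemma line_dist {ℓ : ℝ → X} (hl : IsLine ℓ) (s t : ℝ) : dist (ℓ s) (ℓ t) = |s - t| :=
  hl s trivial t trivial

/-- direction sign from a to b -/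
noncomputable def dir (a b : ℝ) : ℝ := if a ≤ b then 1 else -1

lemma abs_dir (a b : ℝ) : |dir a b| = 1 := by
  unfold dir; split <;> simp

lemma dir_mul_abs (a b : ℝ) : dir a b * |b - a| = b - a := by
  unfold dir; rcases le_or_gt a b with h | h
  · rw [if_pos h, abs_of_nonneg (by linarith)]; ring
  · rw [if_neg (not_le.2 h), abs_of_nonpos (by linarith)]; ring

lemma line_shift {ℓ : ℝ → X} (hl : IsLine ℓ) (ε a : ℝ) (hε : |ε| = 1) :
    IsLine (fun t => ℓ (ε * t + a)) := by
  intro s _ t _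
  rw [line_dist hl]
  have : ε * s + a - (ε * t + a) = ε * (s - t) := by ring
  rw [this, abs_mul, hε, one_mul]

lemma line_seg {ℓ : ℝ → X} (hl : IsLine ℓ) (a b : ℝ) :
    IsGeodesicFromTo (fun t => ℓ (a + dir a b * t)) (ℓ a) (ℓ b) := by
  refine ⟨by simp, ?_, ?_⟩
  · rw [line_dist hl, abs_sub_comm]
    simp [dir_mul_abs a b]
  · intro s _ t _
    rw [line_dist hl]
    have : a + dir a b * s - (a + dir a b * t) = dir a b * (s - t) := by ring
    rw [this, abs_mul, abs_dir, one_mul]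

lemma line_seg_param {ℓ : ℝ → X} (hl : IsLine ℓ) (a b u : ℝ) :
    a + dir a b * (u * dist (ℓ a) (ℓ b)) = a + u * (b - a) := by
  rw [line_dist hl, abs_sub_comm,
    show dir a b * (u * |b - a|) = u * (dir a b * |b - a|) by ring, dir_mul_abs]

lemma geo_reverse {γ : ℝ → X} {x y : X} (h : IsGeodesicFromTo γ x y) :
    IsGeodesicFromTo (fun t => γ (dist x y - t)) y x := by
  obtain ⟨h0, h1, hg⟩ := h
  refine ⟨by simpa using h1, by simp [dist_comm y x, h0], ?_⟩
  intro s hs t ht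
  rw [dist_comm y x] at hs ht
  have := hg (dist x y - s) ⟨by linarith [hs.2], by linarith [hs.1]⟩
      (dist x y - t) ⟨by linarith [ht.2], by linarith [ht.1]⟩
  simpa [abs_sub_comm] using this

/-- The CAT(0) comparison applied with a convenient parameter form. -/
lemma quad (hC : CAT0 X) {γ : ℝ → X} {x y : X} (hγ : IsGeodesicFromTo γ x y)
    {u : ℝ} (hu0 : 0 ≤ u) (hu1 : u ≤ 1) (p : X) :
    dist p (γ (u * dist x y)) ^ 2 ≤
      (1 - u) * dist p x ^ 2 + u * dist p y ^ 2 - u * (1 - u) * dist x y ^ 2 :=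
  hC.2 x y γ hγ u ⟨hu0, hu1⟩ p

lemma quad_line (hC : CAT0 X) {ℓ : ℝ → X} (hl : IsLine ℓ) (a b : ℝ) (p : X)
    {u : ℝ} (hu0 : 0 ≤ u) (hu1 : u ≤ 1) :
    dist p (ℓ (a + u * (b - a))) ^ 2 ≤
      (1 - u) * dist p (ℓ a) ^ 2 + u * dist p (ℓ b) ^ 2 - u * (1 - u) * (b - a) ^ 2 := by
  have h := quad hC (line_seg hl a b) hu0 hu1 p
  simp only [line_seg_param hl a b u] at h
  have hd : dist (ℓ a) (ℓ b) ^ 2 = (b - a) ^ 2 := by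
    rw [line_dist hl, ← abs_sub_comm, sq_abs]
  rwa [hd] at h


/-- comparison along two geodesics with a common start point -/
lemma sameEnd (hC : CAT0 X) {γ η : ℝ → X} {A B B' : X}
    (hγ : IsGeodesicFromTo γ A B) (hη : IsGeodesicFromTo η A B')
    {u : ℝ} (hu0 : 0 ≤ u) (hu1 : u ≤ 1) :
    dist (γ (u * dist A B)) (η (u * dist A B')) ≤ u * dist B B' := by
  set s := dist A B with hs
  set d' := dist A B' with hd'
  set D := dist B B' with hD
  have hs0 : 0 ≤ s := dist_nonneg
  have hd0 : 0 ≤ d' := dist_nonneg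
  have hD0 : 0 ≤ D := dist_nonneg
  set p := γ (u * s) with hp
  have hpA : dist p A = u * s := by
    have := hγ.2.2 (u * s) ⟨mul_nonneg hu0 hs0, by nlinarith [hs0, hu1]⟩ 0 ⟨le_refl 0, hs0⟩
    rw [hγ.1] at this
    rw [this, sub_zero, abs_of_nonneg (mul_nonneg hu0 hs0)]
  have h1 := hC.2 A B' η hη u ⟨hu0, hu1⟩ p
  have h2 := hC.2 A B γ hγ u ⟨hu0, hu1⟩ B'
  rw [dist_comm B' A, dist_comm B' B, dist_comm B' (γ (u * dist A B))] at h2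
  have key : dist p (η (u * d')) ^ 2 ≤ (u * D) ^ 2 := by
    rw [hpA] at h1
    nlinarith [h1, mul_le_mul_of_nonneg_left h2 hu0]
  nlinarith [dist_nonneg (x := p) (y := η (u * d')), mul_nonneg hu0 hD0, key]

/-- joint convexity of the metric -/
lemma jointConvex (hC : CAT0 X) {γ η : ℝ → X} {A B A' B' : X}
    (hγ : IsGeodesicFromTo γ A B) (hη : IsGeodesicFromTo η A' B')
    {u : ℝ} (hu0 : 0 ≤ u) (hu1 : u ≤ 1) :
    dist (γ (u * dist A B)) (η (u * dist A' B')) ≤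
      (1 - u) * dist A A' + u * dist B B' := by
  obtain ⟨δ, hδ⟩ := hC.1 A B'
  have t1 : dist (γ (u * dist A B)) (δ (u * dist A B')) ≤ u * dist B B' :=
    sameEnd hC hγ hδ hu0 hu1
  have hδr := geo_reverse hδ
  have hηr := geo_reverse hη
  have t2 := sameEnd hC hδr hηr (u := 1 - u) (by linarith) (by linarith)
  simp only [dist_comm B' A, dist_comm B' A'] at t2
  have e1 : dist A B' - (1 - u) * dist A B' = u * dist A B' := by ring
  have e2 : dist A' B' - (1 - u) * dist A' B' = u * dist A' B' := by ring
  rw [e1, e2] at t2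
  calc dist (γ (u * dist A B)) (η (u * dist A' B'))
      ≤ dist (γ (u * dist A B)) (δ (u * dist A B'))
        + dist (δ (u * dist A B')) (η (u * dist A' B')) := dist_triangle _ _ _
    _ ≤ u * dist B B' + (1 - u) * dist A A' := add_le_add t1 t2
    _ = (1 - u) * dist A A' + u * dist B B' := by ring

/-- uniqueness of the point between x and y at a given distance -/
lemma unique_between (hC : CAT0 X) {x y p q : X}
    (hp : dist x p + dist p y = dist x y) (hq : dist x q + dist q y = dist x y)
    (hpq : dist x p = dist x q) : p = q := by
  obtain ⟨γ, hγ⟩ := hC.1 x y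
  set L := dist x y with hL
  have hL0 : 0 ≤ L := dist_nonneg
  rcases eq_or_lt_of_le hL0 with h0 | h0
  · have hxp : dist x p = 0 := by
      have := dist_nonneg (x := x) (y := p); have := dist_nonneg (x := p) (y := y); linarith [hp]
    have hxq : dist x q = 0 := by rw [← hpq]; exact hxp
    rw [dist_eq_zero] at hxp hxq; rw [← hxp, ← hxq]
  have key : ∀ r : X, dist x r + dist r y = L → r = γ (dist x r) := by
    intro r hr
    set u := dist x r / L with hu
    have hu0 : 0 ≤ u := div_nonneg dist_nonneg hL0
    have hu1 : u ≤ 1 := by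
      rw [hu, div_le_one h0]
      linarith [dist_nonneg (x := r) (y := y)]
    have h := hC.2 x y γ hγ u ⟨hu0, hu1⟩ r
    have hxr : dist r x = u * L := by
      rw [dist_comm, hu]; field_simp
    have hry : dist r y = (1 - u) * L := by
      have : dist x r = u * L := by rw [dist_comm] at hxr; exact hxr
      linarith [hr, this]
    rw [hxr, hry] at h
    have : dist r (γ (u * L)) ^ 2 ≤ 0 := by nlinarith [h]
    have h2 : dist r (γ (u * L)) = 0 := by
      nlinarith [dist_nonneg (x := r) (y := γ (u * L)), this]
    rw [dist_eq_zero] at h2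
    have harg : u * L = dist x r := by rw [hu]; field_simp
    rw [← harg]; exact h2
  have := key p hp
  have h2 := key q hq
  rw [this, h2, hpq]

/-- a convex function on ℝ that is bounded above is constant -/
lemma convex_bounded_const {h : ℝ → ℝ} {C : ℝ}
    (hconv : ∀ a b u : ℝ, 0 ≤ u → u ≤ 1 → h (a + u * (b - a)) ≤ (1 - u) * h a + u * h b)
    (hbdd : ∀ t, h t ≤ C) : ∀ s t, h s = h t := by
  have main : ∀ a b : ℝ, h b ≤ h a := by
    intro a b
    by_contra hlt
    push_neg at hlt
    set g := h b - h a with hg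
    have hg0 : 0 < g := by simp only [hg]; linarith
    obtain ⟨K, hK⟩ := exists_nat_gt (max 1 ((C - h a) / g))
    have hK1 : (1:ℝ) < K := lt_of_le_of_lt (le_max_left _ _) hK
    have hK0 : (0:ℝ) < K := by linarith
    set u := 1 / (K:ℝ) with hu
    have hu0 : 0 < u := by positivity
    set z := a + K * (b - a) with hz
    have hb : b = a + u * (z - a) := by
      simp only [hz, hu]; field_simp; ring
    have hcb : h b ≤ (1 - u) * h a + u * h z := by
      have := hconv a z u (le_of_lt hu0) (by rw [hu, div_le_one hK0]; linarith)
      rwa [← hb] at this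
    have e1 : g ≤ u * (C - h a) := by
      have h2 := mul_le_mul_of_nonneg_left (hbdd z) (le_of_lt hu0)
      simp only [hg]
      nlinarith [hcb, h2]
    have hCa : C - h a < K * g := by
      have : (C - h a) / g < K := lt_of_le_of_lt (le_max_right _ _) hK
      exact (div_lt_iff₀ hg0).mp this
    have e2 : u * (C - h a) < g := by
      calc u * (C - h a) < u * (K * g) := by exact mul_lt_mul_of_pos_left hCa hu0
        _ = g := by rw [hu]; field_simp
    linarith
  intro s t
  exact le_antisymm (main t s) (main s t)

/-- sqrt upper bound -/
lemma sqrt_add_sq_le {z A : ℝ} (hz : 0 < z) (hA : 0 ≤ A) :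
    Real.sqrt (z ^ 2 + A) ≤ z + A / (2 * z) := by
  have h1 : z ^ 2 + A ≤ (z + A / (2 * z)) ^ 2 := by
    have : (z + A / (2 * z)) ^ 2 = z ^ 2 + A + (A / (2 * z)) ^ 2 := by field_simp; ring
    nlinarith [sq_nonneg (A / (2 * z))]
  calc Real.sqrt (z ^ 2 + A) ≤ Real.sqrt ((z + A / (2 * z)) ^ 2) := Real.sqrt_le_sqrt h1
    _ = z + A / (2 * z) := Real.sqrt_sq (by positivity)

lemma le_sqrt_add_sq {z A : ℝ} (hA : 0 ≤ A) : z ≤ Real.sqrt (z ^ 2 + A) := by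
  rcases le_or_gt z 0 with h | h
  · exact le_trans h (Real.sqrt_nonneg _)
  · calc z = Real.sqrt (z ^ 2) := (Real.sqrt_sq h.le).symm
      _ ≤ _ := Real.sqrt_le_sqrt (by linarith)

/-- an additive continuous real function is linear -/
lemma additive_linear {f : ℝ → ℝ} (hadd : ∀ s t, f (s + t) = f s + f t)
    (hcont : Continuous f) : ∀ t, f t = t * f 1 := by
  have h0 : f 0 = 0 := by have := hadd 0 0; simpa using this
  let F : ℝ →+ ℝ := AddMonoidHom.mk' f hadd
  have hlin := F.toRealLinearMap hcont
  intro t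
  have : F t = F (t • (1:ℝ)) := by norm_num
  calc f t = F t := rfl
    _ = (F.toRealLinearMap hcont) t := rfl
    _ = t • ((F.toRealLinearMap hcont) 1) := by
        rw [← map_smul]; norm_num
    _ = t * f 1 := rfl

lemma dist_eq_sqrt {x y : X} {A : ℝ} (h : dist x y ^ 2 = A) : dist x y = Real.sqrt A := by
  rw [← h, Real.sqrt_sq dist_nonneg]

/-- a continuous function satisfying the exact midpoint relation with ψ 0 = 0 is linear -/
lemma midpoint_affine {ψ : ℝ → ℝ} (hψ0 : ψ 0 = 0)
    (hmid : ∀ h T, ψ h = 1/2 * ψ (h + T) + 1/2 * ψ (h - T))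
    (hcont : Continuous ψ) : ∀ t, ψ t = t * ψ 1 := by
  have hψadd : ∀ s t, ψ (s + t) = ψ s + ψ t := by
    intro s t
    have h1 := hmid ((s + t)/2) ((s - t)/2)
    rw [show (s + t)/2 + (s - t)/2 = s by ring, show (s + t)/2 - (s - t)/2 = t by ring] at h1
    have h2 := hmid ((s + t)/2) ((s + t)/2)
    rw [show (s + t)/2 + (s + t)/2 = s + t by ring, show (s + t)/2 - (s + t)/2 = 0 by ring,
      hψ0] at h2
    linarith
  exact additive_linear hψadd hcont

/-- abstract consequence: the squared distance function is a quadratic -/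
lemma flat_G {G : ℝ → ℝ} (hcont : Continuous G)
    (hkey : ∀ h, G h ^ 2 + G (-h) ^ 2 = 2 * h ^ 2 + 2 * G 0 ^ 2)
    (hmid : ∀ h T, G h ^ 2 ≤ 1/2 * G (h + T) ^ 2 + 1/2 * G (h - T) ^ 2 - T ^ 2) :
    ∀ h, G h ^ 2 = h ^ 2 + h * (G 1 ^ 2 - 1 - G 0 ^ 2) + G 0 ^ 2 := by
  have heq : ∀ h T, G h ^ 2 = 1/2 * G (h + T) ^ 2 + 1/2 * G (h - T) ^ 2 - T ^ 2 := by
    intro h T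
    have l1 := hmid h T
    have l2 := hmid (-h) T
    rw [show -h + T = -(h - T) by ring, show -h - T = -(h + T) by ring] at l2
    have k1 := hkey h
    have k2 := hkey (h - T)
    have k3 := hkey (h + T)
    have goal2 : G h ^ 2 ≥ 1/2 * G (h + T) ^ 2 + 1/2 * G (h - T) ^ 2 - T ^ 2 := by
      nlinarith [l2, k1, k2, k3]
    linarith
  have hlin := midpoint_affine (ψ := fun h => G h ^ 2 - h ^ 2 - G 0 ^ 2)
    (by norm_num)
    (by
      intro h T
      have := heq h T
      nlinarith [this])
    (by exact ((hcont.pow 2).sub ((continuous_id.pow 2))).sub continuous_const)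
  intro h
  have h1 := hlin h
  nlinarith [h1]

set_option maxHeartbeats 1600000 in
/-- Flat strip formula (with shift) for two lines at bounded mutual distance. -/
lemma strip_formula (hC : CAT0 X) {ℓ₁ ℓ₂ : ℝ → X} (hl₁ : IsLine ℓ₁) (hl₂ : IsLine ℓ₂)
    {C : ℝ} (hbd : ∀ t, dist (ℓ₁ t) (ℓ₂ t) ≤ C) :
    ∃ κ E : ℝ, 0 ≤ E ∧ ∀ s t, dist (ℓ₁ s) (ℓ₂ t) ^ 2 = (t - s + κ) ^ 2 + E ^ 2 := by
  -- the shifted distance functions are constant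
  have hconst : ∀ α s t, dist (ℓ₁ s) (ℓ₂ (s + α)) = dist (ℓ₁ t) (ℓ₂ (t + α)) := by
    intro α
    apply convex_bounded_const (C := C + |α|)
    · intro a b u hu0 hu1
      have hj := jointConvex hC (line_seg hl₁ a b) (line_seg hl₂ (a + α) (b + α)) hu0 hu1
      simp only [line_seg_param hl₁ a b u, line_seg_param hl₂ (a + α) (b + α) u] at hj
      have e : a + α + u * (b + α - (a + α)) = a + u * (b - a) + α := by ring
      rwa [e] at hj
    · intro t
      calc dist (ℓ₁ t) (ℓ₂ (t + α)) ≤ dist (ℓ₁ t) (ℓ₂ t) + dist (ℓ₂ t) (ℓ₂ (t + α)) :=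
            dist_triangle _ _ _
        _ ≤ C + |α| := by
            rw [line_dist hl₂]
            have : |t - (t + α)| = |α| := by rw [show t - (t + α) = -α by ring, abs_neg]
            rw [this]
            exact add_le_add_left (hbd t) _
  have hG : ∀ s t, dist (ℓ₁ s) (ℓ₂ t) = dist (ℓ₁ 0) (ℓ₂ (t - s)) := by
    intro s t
    have := hconst (t - s) s 0
    rw [show s + (t - s) = t by ring, zero_add] at this
    exact this
  -- key identity
  have hkey : ∀ h : ℝ, 0 ≤ h →
      dist (ℓ₁ 0) (ℓ₂ h) ^ 2 + dist (ℓ₁ 0) (ℓ₂ (-h)) ^ 2 =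
        2 * h ^ 2 + 2 * dist (ℓ₁ 0) (ℓ₂ 0) ^ 2 := by
    intro h hh
    have hlow := quad_line hC hl₂ (-h) h (ℓ₁ 0) (u := 1/2) (by norm_num) (by norm_num)
    rw [show -h + 1/2 * (h - -h) = 0 by ring] at hlow
    obtain ⟨δ, hδ⟩ := hC.1 (ℓ₁ 0) (ℓ₂ h)
    have q1 := quad hC hδ (u := 1/2) (by norm_num) (by norm_num) (ℓ₁ h)
    have q2 := quad hC hδ (u := 1/2) (by norm_num) (by norm_num) (ℓ₂ 0)
    rw [dist_comm (ℓ₂ 0) (δ (1/2 * dist (ℓ₁ 0) (ℓ₂ h)))] at q2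
    have d11 : dist (ℓ₁ h) (ℓ₁ 0) = h := by
      rw [line_dist hl₁, sub_zero, abs_of_nonneg hh]
    have d12 : dist (ℓ₁ h) (ℓ₂ h) = dist (ℓ₁ 0) (ℓ₂ 0) := by
      rw [hG h h, sub_self]
    have d21 : dist (ℓ₂ 0) (ℓ₁ 0) = dist (ℓ₁ 0) (ℓ₂ 0) := dist_comm _ _
    have d22 : dist (ℓ₂ 0) (ℓ₂ h) = h := by
      rw [line_dist hl₂, abs_of_nonpos (by linarith), neg_sub, sub_zero]
    rw [d11, d12] at q1
    rw [d21, d22] at q2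
    have dmh : dist (ℓ₁ h) (ℓ₂ 0) = dist (ℓ₁ 0) (ℓ₂ (-h)) := by
      rw [hG h 0, zero_sub]
    have htri : dist (ℓ₁ 0) (ℓ₂ (-h)) ≤
        dist (ℓ₁ h) (δ (1/2 * dist (ℓ₁ 0) (ℓ₂ h))) +
          dist (δ (1/2 * dist (ℓ₁ 0) (ℓ₂ h))) (ℓ₂ 0) := by
      rw [← dmh]
      exact dist_triangle _ _ _
    have hsq : dist (ℓ₁ 0) (ℓ₂ (-h)) ^ 2 ≤
        (dist (ℓ₁ h) (δ (1/2 * dist (ℓ₁ 0) (ℓ₂ h))) +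
          dist (δ (1/2 * dist (ℓ₁ 0) (ℓ₂ h))) (ℓ₂ 0)) ^ 2 := by
      nlinarith [htri, dist_nonneg (x := ℓ₁ 0) (y := ℓ₂ (-h)),
        dist_nonneg (x := ℓ₁ h) (y := δ (1/2 * dist (ℓ₁ 0) (ℓ₂ h))),
        dist_nonneg (x := δ (1/2 * dist (ℓ₁ 0) (ℓ₂ h))) (y := ℓ₂ 0)]
    have hup : dist (ℓ₁ 0) (ℓ₂ (-h)) ^ 2 ≤
        2 * h ^ 2 + 2 * dist (ℓ₁ 0) (ℓ₂ 0) ^ 2 - dist (ℓ₁ 0) (ℓ₂ h) ^ 2 := by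
      nlinarith [hsq, q1, q2,
        sq_nonneg (dist (ℓ₁ h) (δ (1/2 * dist (ℓ₁ 0) (ℓ₂ h))) -
          dist (δ (1/2 * dist (ℓ₁ 0) (ℓ₂ h))) (ℓ₂ 0))]
    nlinarith [hlow, hup]
  -- midpoint convexity
  have hmid : ∀ h T : ℝ, dist (ℓ₁ 0) (ℓ₂ h) ^ 2 ≤
      1/2 * dist (ℓ₁ 0) (ℓ₂ (h + T)) ^ 2 + 1/2 * dist (ℓ₁ 0) (ℓ₂ (h - T)) ^ 2 - T ^ 2 := by
    intro h T
    have q := quad_line hC hl₁ (-T) T (ℓ₂ h) (u := 1/2) (by norm_num) (by norm_num)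
    rw [show -T + 1/2 * (T - -T) = 0 by ring] at q
    have e0 : dist (ℓ₂ h) (ℓ₁ 0) = dist (ℓ₁ 0) (ℓ₂ h) := dist_comm _ _
    have eA : dist (ℓ₂ h) (ℓ₁ (-T)) = dist (ℓ₁ 0) (ℓ₂ (h + T)) := by
      rw [dist_comm, hG, sub_neg_eq_add]
    have eB : dist (ℓ₂ h) (ℓ₁ T) = dist (ℓ₁ 0) (ℓ₂ (h - T)) := by
      rw [dist_comm, hG]
    rw [e0, eA, eB] at q
    nlinarith [q]
  have hcont : Continuous (fun α => dist (ℓ₁ 0) (ℓ₂ α)) := by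
    have hlip : LipschitzWith 1 (fun α => dist (ℓ₁ 0) (ℓ₂ α)) := by
      apply LipschitzWith.of_dist_le_mul
      intro a b
      simp only [Real.dist_eq, NNReal.coe_one, one_mul]
      have h1 : |dist (ℓ₁ 0) (ℓ₂ a) - dist (ℓ₁ 0) (ℓ₂ b)| ≤ dist (ℓ₂ a) (ℓ₂ b) := by
        rw [dist_comm (ℓ₁ 0) (ℓ₂ a), dist_comm (ℓ₁ 0) (ℓ₂ b)]
        exact abs_dist_sub_le _ _ _
      rw [line_dist hl₂] at h1
      exact h1
    exact hlip.continuous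
  have hkey' : ∀ h : ℝ, dist (ℓ₁ 0) (ℓ₂ h) ^ 2 + dist (ℓ₁ 0) (ℓ₂ (-h)) ^ 2 =
      2 * h ^ 2 + 2 * dist (ℓ₁ 0) (ℓ₂ 0) ^ 2 := by
    intro h
    rcases le_or_gt 0 h with hh | hh
    · exact hkey h hh
    · have := hkey (-h) (by linarith)
      rw [neg_neg, neg_sq] at this
      linarith [this]
  have hquad := flat_G (G := fun α => dist (ℓ₁ 0) (ℓ₂ α)) hcont hkey' hmid
  have hquad' : ∀ h : ℝ, dist (ℓ₁ 0) (ℓ₂ h) ^ 2 =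
      h ^ 2 + h * (dist (ℓ₁ 0) (ℓ₂ 1) ^ 2 - 1 - dist (ℓ₁ 0) (ℓ₂ 0) ^ 2) +
        dist (ℓ₁ 0) (ℓ₂ 0) ^ 2 := by
    intro h
    have := hquad h
    simpa using this
  obtain ⟨k, hk⟩ : ∃ k : ℝ, ∀ h : ℝ, dist (ℓ₁ 0) (ℓ₂ h) ^ 2 =
      h ^ 2 + h * k + dist (ℓ₁ 0) (ℓ₂ 0) ^ 2 :=
    ⟨_, hquad'⟩
  have hE2 : 0 ≤ dist (ℓ₁ 0) (ℓ₂ 0) ^ 2 - (k/2) ^ 2 := by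
    have := hk (-(k/2))
    nlinarith [sq_nonneg (dist (ℓ₁ 0) (ℓ₂ (-(k/2))))]
  refine ⟨k/2, Real.sqrt (dist (ℓ₁ 0) (ℓ₂ 0) ^ 2 - (k/2) ^ 2), Real.sqrt_nonneg _, ?_⟩
  intro s t
  rw [hG s t, Real.sq_sqrt hE2, hk (t - s)]
  ring

/-- normalized parallel line: synchronized with `c` at constant distance -/
def Sync (c ℓ : ℝ → X) (E : ℝ) : Prop :=
  IsLine ℓ ∧ ∀ s t, dist (ℓ s) (c t) ^ 2 = (s - t) ^ 2 + E ^ 2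

lemma line_neg {ℓ : ℝ → X} (hl : IsLine ℓ) : IsLine (fun t => ℓ (-t)) := by
  intro s _ t _
  simp only []
  rw [line_dist hl, show -s - -t = -(s - t) by ring, abs_neg]

lemma sync_neg {c ℓ : ℝ → X} {E : ℝ} (h : Sync c ℓ E) :
    Sync (fun t => c (-t)) (fun t => ℓ (-t)) E := by
  refine ⟨line_neg h.1, ?_⟩
  intro s t
  simp only []
  rw [h.2 (-s) (-t), show (-s - -t) ^ 2 = (s - t) ^ 2 by ring]

lemma sync_selfdist {c ℓ : ℝ → X} {E : ℝ} (h : Sync c ℓ E) (t : ℝ) :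
    dist (ℓ t) (c t) = |E| := by
  have h2 := h.2 t t
  rw [sub_self] at h2
  rw [dist_eq_sqrt h2, show (0:ℝ) ^ 2 + E ^ 2 = E ^ 2 by ring, Real.sqrt_sq_eq_abs]

/-- normalization: a line at bounded distance from `c` can be shifted to a synced line -/
lemma sync_of_bounded (hC : CAT0 X) {c ℓ : ℝ → X} (hc : IsLine c) (hl : IsLine ℓ)
    {C : ℝ} (hbd : ∀ t, dist (ℓ t) (c t) ≤ C) :
    ∃ a E : ℝ, 0 ≤ E ∧ Sync c (fun t => ℓ (t + a)) E := by
  obtain ⟨κ, E, hE, hf⟩ := strip_formula hC hc hl (C := C)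
    (fun t => by rw [dist_comm]; exact hbd t)
  refine ⟨-κ, E, hE, ?_, ?_⟩
  · have := line_shift hl 1 (-κ) (by norm_num)
    simp only [one_mul] at this
    exact this
  · intro s t
    simp only []
    rw [dist_comm, hf t (s + -κ), show (s + -κ - t + κ) ^ 2 = (s - t) ^ 2 by ring]

/-- real helper: forall-epsilon bound gives nonpositivity -/
lemma nonpos_of_forall_le {κ : ℝ} (h : ∀ ε : ℝ, 0 < ε → κ ≤ ε) : κ ≤ 0 := by
  by_contra hκ
  push_neg at hκ
  have := h (κ/2) (by linarith)
  linarith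

lemma kappa_nonpos {c ℓ₁ ℓ₂ : ℝ → X} {E₁ E₂ κ e : ℝ}
    (h₁ : Sync c ℓ₁ E₁) (h₂ : Sync c ℓ₂ E₂) (he : 0 ≤ e)
    (hf : ∀ s t, dist (ℓ₁ s) (ℓ₂ t) ^ 2 = (t - s + κ) ^ 2 + e ^ 2) : κ ≤ 0 := by
  apply nonpos_of_forall_le
  intro ε hε
  set T := max (κ + max 1 (e ^ 2 / ε)) (max 1 (E₂ ^ 2 / ε)) with hT
  have hTκ : max 1 (e ^ 2 / ε) ≤ T - κ := by
    have := le_max_left (κ + max 1 (e ^ 2 / ε)) (max 1 (E₂ ^ 2 / ε))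
    linarith
  have hTκ1 : (1:ℝ) ≤ T - κ := le_trans (le_max_left _ _) hTκ
  have hTκ0 : 0 < T - κ := by linarith
  have hT1 : (1:ℝ) ≤ T := le_trans (le_max_left _ _) (le_max_right _ _)
  have hT0 : 0 < T := by linarith
  -- the three distances
  have hA : 2 * T ≤ dist (ℓ₁ T) (c (-T)) := by
    have h2 := h₁.2 T (-T)
    rw [show (T - -T) ^ 2 = (2*T) ^ 2 by ring] at h2
    rw [dist_eq_sqrt h2]
    exact le_sqrt_add_sq (sq_nonneg E₁)
  have hB : dist (ℓ₁ T) (ℓ₂ 0) ≤ (T - κ) + e ^ 2 / (2 * (T - κ)) := by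
    have h2 := hf T 0
    rw [show (0 - T + κ) ^ 2 = (T - κ) ^ 2 by ring] at h2
    rw [dist_eq_sqrt h2]
    exact sqrt_add_sq_le hTκ0 (sq_nonneg e)
  have hCd : dist (ℓ₂ 0) (c (-T)) ≤ T + E₂ ^ 2 / (2 * T) := by
    have h2 := h₂.2 0 (-T)
    rw [show ((0:ℝ) - -T) ^ 2 = T ^ 2 by ring] at h2
    rw [dist_eq_sqrt h2]
    exact sqrt_add_sq_le hT0 (sq_nonneg E₂)
  have htri := dist_triangle (ℓ₁ T) (ℓ₂ 0) (c (-T))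
  have hmain : κ ≤ e ^ 2 / (2 * (T - κ)) + E₂ ^ 2 / (2 * T) := by linarith
  have hb1 : e ^ 2 / (2 * (T - κ)) ≤ ε / 2 := by
    rw [div_le_div_iff₀ (by linarith) (by norm_num)]
    have h1 : e ^ 2 / ε ≤ T - κ := le_trans (le_max_right _ _) hTκ
    have h2 : e ^ 2 ≤ ε * (T - κ) := by
      rw [div_le_iff₀ hε] at h1
      linarith [h1]
    nlinarith [h2]
  have hb2 : E₂ ^ 2 / (2 * T) ≤ ε / 2 := by
    rw [div_le_div_iff₀ (by linarith) (by norm_num)]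
    have h1 : E₂ ^ 2 / ε ≤ T := le_trans (le_max_right _ _) (le_max_right _ _)
    have h2 : E₂ ^ 2 ≤ ε * T := by
      rw [div_le_iff₀ hε] at h1
      linarith [h1]
    nlinarith [h2]
  linarith

/-- two synced lines satisfy the exact flat formula with no shift -/
lemma sync_pair (hC : CAT0 X) {c ℓ₁ ℓ₂ : ℝ → X} {E₁ E₂ : ℝ}
    (h₁ : Sync c ℓ₁ E₁) (h₂ : Sync c ℓ₂ E₂) :
    ∀ s t, dist (ℓ₁ s) (ℓ₂ t) ^ 2 = (s - t) ^ 2 + dist (ℓ₁ 0) (ℓ₂ 0) ^ 2 := by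
  have hbd : ∀ t, dist (ℓ₁ t) (ℓ₂ t) ≤ |E₁| + |E₂| := by
    intro t
    calc dist (ℓ₁ t) (ℓ₂ t) ≤ dist (ℓ₁ t) (c t) + dist (c t) (ℓ₂ t) := dist_triangle _ _ _
      _ = |E₁| + |E₂| := by
          rw [sync_selfdist h₁ t, dist_comm, sync_selfdist h₂ t]
  obtain ⟨κ, e, he, hf⟩ := strip_formula hC h₁.1 h₂.1 hbd
  have hκ1 : κ ≤ 0 := kappa_nonpos h₁ h₂ he hf
  have hκ2 : -κ ≤ 0 := by
    have hf' : ∀ s t, dist (ℓ₁ (-s)) (ℓ₂ (-t)) ^ 2 = (t - s + -κ) ^ 2 + e ^ 2 := by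
      intro s t
      rw [hf (-s) (-t), show (-t - -s + κ) ^ 2 = (t - s + -κ) ^ 2 by ring]
    exact kappa_nonpos (sync_neg h₁) (sync_neg h₂) he hf'
  have hκ : κ = 0 := by linarith
  have he2 : dist (ℓ₁ 0) (ℓ₂ 0) ^ 2 = e ^ 2 := by
    have := hf 0 0
    rw [hκ] at this
    rw [this]; ring
  intro s t
  rw [hf s t, hκ, he2, show (t - s + 0) ^ 2 = (s - t) ^ 2 by ring]

set_option maxHeartbeats 1000000 in
/-- a line that stays `H`-close to `c` pointwise (via some correspondence `f`) with positive
orientation can be shifted to be boundedly synced with `c` -/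
lemma bounded_of_quasi {c ℓ : ℝ → X} (hc : IsLine c) (hl : IsLine ℓ) {H : ℝ} (hH : 0 ≤ H)
    (f : ℝ → ℝ) (hf : ∀ s, dist (ℓ s) (c (f s)) ≤ H) (hpos : 0 < f (3*H+1) - f 0) :
    ∀ t, dist (ℓ (t - f 0)) (c t) ≤ 9*H + 2 := by
  have hup : ∀ s s', |f s - f s'| ≤ |s - s'| + 2*H := by
    intro s s'
    have h1 : dist (c (f s)) (c (f s')) ≤
        dist (c (f s)) (ℓ s) + dist (ℓ s) (ℓ s') + dist (ℓ s') (c (f s')) :=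
      dist_triangle4 _ _ _ _
    rw [line_dist hc, line_dist hl, dist_comm (c (f s)) (ℓ s)] at h1
    linarith [hf s, hf s']
  have hlo : ∀ s s', |s - s'| - 2*H ≤ |f s - f s'| := by
    intro s s'
    have h1 : dist (ℓ s) (ℓ s') ≤
        dist (ℓ s) (c (f s)) + dist (c (f s)) (c (f s')) + dist (c (f s')) (ℓ s') :=
      dist_triangle4 _ _ _ _
    rw [line_dist hc, line_dist hl, dist_comm (c (f s')) (ℓ s')] at h1
    linarith [hf s, hf s']
  set s₁ : ℝ := 3*H+1 with hs₁
  have ha : f s₁ - f 0 ∈ Set.Icc (s₁ - 2*H) (s₁ + 2*H) := by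
    have h1 := hup s₁ 0
    have h2 := hlo s₁ 0
    rw [sub_zero, abs_of_pos (show (0:ℝ) < s₁ by rw [hs₁]; linarith)] at h1 h2
    have h3 := abs_le.mp h1
    have h4 := le_abs_self (f s₁ - f 0)
    constructor
    · rw [abs_of_pos hpos] at h2; linarith
    · linarith [h3.2]
  -- positivity of the drift for s ≥ s₁
  have hnear : ∀ s, s₁ ≤ s → |f s - f 0 - s| ≤ 2*H := by
    intro s hs
    have hs0 : 0 < s := by rw [hs₁] at hs; linarith
    have h1 := hup s 0
    have h2 := hlo s 0
    rw [sub_zero, abs_of_pos hs0] at h1 h2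
    have h3 := abs_le.mp h1
    have hbpos : 0 < f s - f 0 := by
      by_contra hb
      push_neg at hb
      have h5 := hup s s₁
      rw [abs_of_nonneg (by linarith : (0:ℝ) ≤ s - s₁)] at h5
      have h6 := abs_le.mp h5
      have h7 : -(f s - f 0) ≥ s - 2*H := by
        rcases abs_cases (f s - f 0) with ⟨he, _⟩ | ⟨he, _⟩
        · nlinarith [h2, he]
        · linarith [h2, he]
      have h8 : f s - f s₁ = (f s - f 0) - (f s₁ - f 0) := by ring
      rw [hs₁] at *
      linarith [h6.1, ha.1, h7]
    rw [abs_of_pos hbpos] at h2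
    rw [abs_le]
    exact ⟨by linarith, by linarith [h3.2]⟩
  have hfar : ∀ s, s ≤ -s₁ → |f s - f 0 - s| ≤ 2*H := by
    intro s hs
    have hs0 : s < 0 := by rw [hs₁] at hs; linarith
    have h1 := hup s 0
    have h2 := hlo s 0
    rw [sub_zero, abs_of_neg hs0] at h1 h2
    have h3 := abs_le.mp h1
    have hbneg : f s - f 0 < 0 := by
      by_contra hb
      push_neg at hb
      have hblo : -s - 2*H ≤ f s - f 0 := by
        rcases abs_cases (f s - f 0) with ⟨he, _⟩ | ⟨he, hneg⟩
        · linarith [h2, he]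
        · linarith [hb, hneg, h2, he]
      have h5 := hup s s₁
      have h6 := hlo s s₁
      rw [abs_of_neg (by rw [hs₁] at *; linarith : s - s₁ < 0)] at h5 h6
      have h7 := abs_le.mp h5
      rcases le_total (f s - f s₁) 0 with hc1 | hc1
      · have h8 := abs_of_nonpos hc1
        have h9 : f s - f s₁ = (f s - f 0) - (f s₁ - f 0) := by ring
        rw [hs₁] at *
        linarith [h6, ha.2, hblo]
      · have h8 := abs_of_nonneg hc1
        have h9 : f s - f s₁ = (f s - f 0) - (f s₁ - f 0) := by ring
        rw [hs₁] at *
        linarith [h6, ha.1, h3.2]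
    rw [abs_of_neg hbneg] at h2
    rw [abs_le]
    exact ⟨by linarith [h3.2], by linarith⟩
  have hmidd : ∀ s, |s| ≤ s₁ → |f s - f 0 - s| ≤ 8*H + 2 := by
    intro s hs
    have h1 := hup s 0
    rw [sub_zero] at h1
    have h3 := abs_le.mp h1
    have h4 := abs_le.mp hs
    rw [hs₁] at *
    have := le_abs_self s
    have := neg_abs_le s
    rw [abs_le]
    constructor <;> nlinarith [h3.1, h3.2, h4.1, h4.2]
  have hall : ∀ s, |f s - f 0 - s| ≤ 8*H + 2 := by
    intro s
    rcases le_total s₁ s with h | h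
    · linarith [hnear s h]
    · rcases le_total s (-s₁) with h' | h'
      · linarith [hfar s h']
      · have : |s| ≤ s₁ := abs_le.mpr ⟨by linarith, h⟩
        exact hmidd s this
  intro t
  set s := t - f 0 with hsdef
  calc dist (ℓ s) (c t) ≤ dist (ℓ s) (c (f s)) + dist (c (f s)) (c t) := dist_triangle _ _ _
    _ ≤ H + (8*H + 2) := by
        have h1 := hf s
        have h2 : dist (c (f s)) (c t) = |f s - t| := line_dist hc _ _
        have h3 : f s - t = f s - f 0 - s := by rw [hsdef]; ring
        rw [h2, h3]
        linarith [hall s]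
    _ = 9*H + 2 := by ring

lemma quasi_bounds {c ℓ : ℝ → X} (hc : IsLine c) (hl : IsLine ℓ) {H : ℝ}
    (f : ℝ → ℝ) (hf : ∀ s, dist (ℓ s) (c (f s)) ≤ H) (s s' : ℝ) :
    |s - s'| - 2*H ≤ |f s - f s'| ∧ |f s - f s'| ≤ |s - s'| + 2*H := by
  constructor
  · have h1 : dist (ℓ s) (ℓ s') ≤
        dist (ℓ s) (c (f s)) + dist (c (f s)) (c (f s')) + dist (c (f s')) (ℓ s') :=
      dist_triangle4 _ _ _ _
    rw [line_dist hc, line_dist hl, dist_comm (c (f s')) (ℓ s')] at h1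
    linarith [hf s, hf s']
  · have h1 : dist (c (f s)) (c (f s')) ≤
        dist (c (f s)) (ℓ s) + dist (ℓ s) (ℓ s') + dist (ℓ s') (c (f s')) :=
      dist_triangle4 _ _ _ _
    rw [line_dist hc, line_dist hl, dist_comm (c (f s)) (ℓ s)] at h1
    linarith [hf s, hf s']

set_option maxHeartbeats 1000000 in
/-- every line parallel to `c` admits a synced reparametrization -/
lemma sync_of_parallel (hC : CAT0 X) {c ℓ : ℝ → X} (hc : IsLine c) (hl : IsLine ℓ)
    (hpar : EMetric.hausdorffEdist (Set.range ℓ) (Set.range c) ≠ ⊤) :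
    ∃ (ℓ' : ℝ → X) (E : ℝ), 0 ≤ E ∧ Sync c ℓ' E ∧ ∀ u : ℝ, ∃ v : ℝ, ℓ' v = ℓ u := by
  have hfin : EMetric.hausdorffEdist (Set.range ℓ) (Set.range c) + 1 ≠ ⊤ := by
    simp [hpar]
  have hfex : ∀ s : ℝ, ∃ t : ℝ,
      dist (ℓ s) (c t) ≤ (EMetric.hausdorffEdist (Set.range ℓ) (Set.range c) + 1).toReal := by
    intro s
    have h1 : EMetric.infEdist (ℓ s) (Set.range c) ≤
        EMetric.hausdorffEdist (Set.range ℓ) (Set.range c) :=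
      EMetric.infEdist_le_hausdorffEdist_of_mem (Set.mem_range_self s)
    have h2 : EMetric.infEdist (ℓ s) (Set.range c) <
        EMetric.hausdorffEdist (Set.range ℓ) (Set.range c) + 1 :=
      lt_of_le_of_lt h1 (ENNReal.lt_add_right hpar one_ne_zero)
    obtain ⟨y, hy, hdy⟩ := EMetric.infEdist_lt_iff.mp h2
    obtain ⟨t, rfl⟩ := hy
    refine ⟨t, ?_⟩
    rw [dist_edist]
    exact ENNReal.toReal_mono hfin hdy.le
  set H := (EMetric.hausdorffEdist (Set.range ℓ) (Set.range c) + 1).toReal with hHdef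
  have hH0 : 0 ≤ H := ENNReal.toReal_nonneg
  choose f hf using hfex
  -- sign analysis at ±(3H+1)
  have hb := fun s s' => quasi_bounds hc hl f hf s s'
  have habs : ∀ s : ℝ, 3*H+1 ≤ |s| → H + 1 ≤ |f s - f 0| := by
    intro s hs
    have := (hb s 0).1
    rw [sub_zero] at this
    linarith
  rcases lt_trichotomy 0 (f (3*H+1) - f 0) with hsgn | hsgn | hsgn
  · -- positive orientation
    have hquasi := bounded_of_quasi hc hl hH0 f hf hsgn
    have hl₀ : IsLine (fun t => ℓ (1 * t + -(f 0))) := line_shift hl 1 (-(f 0)) (by norm_num)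
    have hbd : ∀ t, dist ((fun t => ℓ (1 * t + -(f 0))) t) (c t) ≤ 9*H + 2 := by
      intro t
      have := hquasi t
      rwa [show t - f 0 = 1 * t + -(f 0) by ring] at this
    obtain ⟨a, E, hE, hsync⟩ := sync_of_bounded hC hc hl₀ hbd
    refine ⟨_, E, hE, hsync, ?_⟩
    intro u
    refine ⟨u - a + f 0, ?_⟩
    show ℓ (1 * (u - a + f 0 + a) + -(f 0)) = ℓ u
    congr 1
    ring
  · -- impossible: drift too small
    exfalso
    have := habs (3*H+1) (by rw [abs_of_pos (by linarith)])
    rw [← hsgn] at this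
    simp at this
    linarith
  · -- negative orientation: reverse the line
    have hsgn' : 0 < f (-(3*H+1)) - f 0 := by
      by_contra hbneg
      push_neg at hbneg
      have h1 := habs (-(3*H+1)) (by rw [abs_of_neg (by linarith)]; linarith)
      have h2 := habs (3*H+1) (by rw [abs_of_pos (by linarith)])
      have h3 := (hb (3*H+1) (-(3*H+1))).1
      rw [show (3*H+1) - (-(3*H+1)) = 2*(3*H+1) by ring,
        abs_of_pos (show (0:ℝ) < 2*(3*H+1) by linarith)] at h3
      have h4 := (hb (3*H+1) 0).2
      have h5 := (hb (-(3*H+1)) 0).2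
      rw [sub_zero, abs_of_pos (show (0:ℝ) < 3*H+1 by linarith)] at h4
      rw [sub_zero, abs_of_neg (show -(3*H+1) < (0:ℝ) by linarith)] at h5
      have e1 : |f (3*H+1) - f 0| = -(f (3*H+1) - f 0) := abs_of_neg hsgn
      have e2 : |f (-(3*H+1)) - f 0| = -(f (-(3*H+1)) - f 0) := by
        rcases lt_or_eq_of_le hbneg with h | h
        · exact abs_of_neg h
        · rw [h]; simp
      rw [e1] at h4
      rw [e2] at h5
      rcases abs_cases (f (3*H+1) - f (-(3*H+1))) with ⟨he, _⟩ | ⟨he, _⟩ <;>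
      · rw [he] at h3
        linarith
    have hfneg : ∀ s, dist ((fun t => ℓ (-t)) s) (c ((fun s => f (-s)) s)) ≤ H := by
      intro s
      exact hf (-s)
    have hquasi := bounded_of_quasi hc (line_neg hl) hH0 (fun s => f (-s)) hfneg
      (by rw [neg_zero]; exact hsgn')
    have hl₀ : IsLine (fun t => ℓ (-1 * t + f 0)) := line_shift hl (-1) (f 0) (by norm_num)
    have hbd : ∀ t, dist ((fun t => ℓ (-1 * t + f 0)) t) (c t) ≤ 9*H + 2 := by
      intro t
      have := hquasi t
      rwa [show -(t - f (-0)) = -1 * t + f 0 by rw [neg_zero]; ring] at this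
    obtain ⟨a, E, hE, hsync⟩ := sync_of_bounded hC hc hl₀ hbd
    refine ⟨_, E, hE, hsync, ?_⟩
    intro u
    refine ⟨-u - a + f 0, ?_⟩
    show ℓ (-1 * (-u - a + f 0 + a) + f 0) = ℓ u
    congr 1
    ring

set_option maxHeartbeats 2000000 in
/-- any point between two synced lines lies on a synced line -/
lemma between_mem (hC : CAT0 X) {c ℓ₁ ℓ₂ : ℝ → X} {E₁ E₂ : ℝ} (hcl : IsLine c)
    (h₁ : Sync c ℓ₁ E₁) (h₂ : Sync c ℓ₂ E₂) {τ₁ τ₂ : ℝ} {p : X}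
    (hp : dist (ℓ₁ τ₁) p + dist p (ℓ₂ τ₂) = dist (ℓ₁ τ₁) (ℓ₂ τ₂)) :
    ∃ (lam : ℝ → X) (E : ℝ), Sync c lam E ∧ ∃ v, lam v = p := by
  obtain ⟨e, hedef⟩ : ∃ e, dist (ℓ₁ 0) (ℓ₂ 0) = e := ⟨_, rfl⟩
  have hpair : ∀ s t, dist (ℓ₁ s) (ℓ₂ t) ^ 2 = (s - t) ^ 2 + e ^ 2 := by
    intro s t
    rw [sync_pair hC h₁ h₂ s t, hedef]
  have he0 : 0 ≤ e := hedef ▸ dist_nonneg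
  obtain ⟨L, hLdef⟩ : ∃ L, dist (ℓ₁ τ₁) (ℓ₂ τ₂) = L := ⟨_, rfl⟩
  rw [hLdef] at hp
  have hL2 : L ^ 2 = (τ₁ - τ₂) ^ 2 + e ^ 2 := by rw [← hLdef]; exact hpair τ₁ τ₂
  have hL0 : 0 ≤ L := hLdef ▸ dist_nonneg
  rcases eq_or_lt_of_le hL0 with hL | hL
  · -- degenerate: p = ℓ₁ τ₁
    have hxp : dist (ℓ₁ τ₁) p = 0 := by
      have := dist_nonneg (x := ℓ₁ τ₁) (y := p)
      have := dist_nonneg (x := p) (y := ℓ₂ τ₂)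
      linarith [hp]
    rw [dist_eq_zero] at hxp
    exact ⟨ℓ₁, E₁, h₁, τ₁, hxp⟩
  obtain ⟨u, hudef⟩ : ∃ u, dist (ℓ₁ τ₁) p / L = u := ⟨_, rfl⟩
  have hdxp : dist (ℓ₁ τ₁) p = u * L := by rw [← hudef]; field_simp
  have hu0 : 0 ≤ u := hudef ▸ div_nonneg dist_nonneg hL0
  have hu1 : u ≤ 1 := by
    rw [← hudef, div_le_one hL]
    linarith [dist_nonneg (x := p) (y := ℓ₂ τ₂)]
  have hdpy : dist p (ℓ₂ τ₂) = (1 - u) * L := by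
    have h := hp
    rw [hdxp] at h
    linarith
  rcases eq_or_lt_of_le hu0 with hu0' | hu0'
  · -- u = 0 : p = ℓ₁ τ₁
    have : dist (ℓ₁ τ₁) p = 0 := by rw [hdxp, ← hu0']; ring
    rw [dist_eq_zero] at this
    exact ⟨ℓ₁, E₁, h₁, τ₁, this⟩
  rcases eq_or_lt_of_le hu1 with hu1' | hu1'
  · -- u = 1 : p = ℓ₂ τ₂
    have : dist p (ℓ₂ τ₂) = 0 := by rw [hdpy, hu1']; ring
    rw [dist_eq_zero] at this
    exact ⟨ℓ₂, E₂, h₂, τ₂, this.symm⟩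
  rcases eq_or_lt_of_le he0 with he | he
  · -- e = 0 : the two lines coincide
    have heq : ∀ t, ℓ₂ t = ℓ₁ t := by
      intro t
      have h2 : dist (ℓ₁ t) (ℓ₂ t) ^ 2 = 0 := by rw [hpair t t, ← he]; ring
      have h3 : dist (ℓ₁ t) (ℓ₂ t) = 0 := by
        nlinarith [dist_nonneg (x := ℓ₁ t) (y := ℓ₂ t)]
      rw [dist_eq_zero] at h3
      exact h3.symm
    have hLabs : L = |τ₁ - τ₂| := by
      have h2 : L ^ 2 = (τ₁ - τ₂) ^ 2 := by rw [hL2, ← he]; ring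
      have h3 : dist (ℓ₁ τ₁) (ℓ₂ τ₂) ^ 2 = (τ₁ - τ₂) ^ 2 := by rw [hLdef]; exact h2
      rw [← hLdef, dist_eq_sqrt h3, Real.sqrt_sq_eq_abs]
    have hxq : dist (ℓ₁ τ₁) (ℓ₁ (τ₁ + u * (τ₂ - τ₁))) = u * L := by
      rw [line_dist h₁.1, hLabs, show τ₁ - (τ₁ + u * (τ₂ - τ₁)) = u * (τ₁ - τ₂) by ring,
        abs_mul, abs_of_nonneg hu0]
    have hqy : dist (ℓ₁ (τ₁ + u * (τ₂ - τ₁))) (ℓ₂ τ₂) = (1 - u) * L := by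
      rw [heq τ₂, line_dist h₁.1, hLabs,
        show τ₁ + u * (τ₂ - τ₁) - τ₂ = (1-u) * (τ₁ - τ₂) by ring,
        abs_mul, abs_of_nonneg (by linarith : (0:ℝ) ≤ 1 - u)]
    have hq : dist (ℓ₁ τ₁) (ℓ₁ (τ₁ + u * (τ₂ - τ₁))) +
        dist (ℓ₁ (τ₁ + u * (τ₂ - τ₁))) (ℓ₂ τ₂) = dist (ℓ₁ τ₁) (ℓ₂ τ₂) := by
      rw [hxq, hqy, hLdef, ← hdxp, ← hdpy]
      exact hp
    have hp' : dist (ℓ₁ τ₁) p + dist p (ℓ₂ τ₂) = dist (ℓ₁ τ₁) (ℓ₂ τ₂) := by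
      rw [hLdef]; exact hp
    have hpq : p = ℓ₁ (τ₁ + u * (τ₂ - τ₁)) :=
      unique_between hC hp' hq (by rw [hdxp, hxq])
    exact ⟨ℓ₁, E₁, h₁, τ₁ + u * (τ₂ - τ₁), hpq.symm⟩
  -- main case : 0 < u < 1, 0 < e
  have het : ∀ t, dist (ℓ₁ t) (ℓ₂ t) = e := by
    intro t
    have h2 : dist (ℓ₁ t) (ℓ₂ t) ^ 2 = e ^ 2 := by rw [hpair t t]; ring
    rw [dist_eq_sqrt h2, Real.sqrt_sq he0]
  choose σ hσ using fun t => hC.1 (ℓ₁ t) (ℓ₂ t)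
  obtain ⟨lam, hlamdef⟩ : ∃ lam : ℝ → X, (fun t => σ t (u * e)) = lam := ⟨_, rfl⟩
  have hlam_app : ∀ t, lam t = σ t (u * dist (ℓ₁ t) (ℓ₂ t)) := by
    intro t
    rw [← hlamdef, het t]
  -- upper bounds
  have F1 : ∀ s t, dist (ℓ₁ s) (lam t) ^ 2 ≤ (s - t) ^ 2 + (u * e) ^ 2 := by
    intro s t
    have q := quad hC (hσ t) hu0 hu1 (ℓ₁ s)
    rw [← hlam_app t] at q
    have d1 : dist (ℓ₁ s) (ℓ₁ t) ^ 2 = (s - t) ^ 2 := by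
      rw [line_dist h₁.1, sq_abs]
    have d2 := hpair s t
    have d3 : dist (ℓ₁ t) (ℓ₂ t) ^ 2 = e ^ 2 := by rw [het t]
    rw [d1, d2, d3] at q
    nlinarith [q]
  have F2 : ∀ s t, dist (ℓ₂ s) (lam t) ^ 2 ≤ (s - t) ^ 2 + ((1 - u) * e) ^ 2 := by
    intro s t
    have hrev := geo_reverse (hσ t)
    have q := quad hC hrev (u := 1 - u) (by linarith) (by linarith) (ℓ₂ s)
    have harg : dist (ℓ₁ t) (ℓ₂ t) - (1 - u) * dist (ℓ₂ t) (ℓ₁ t) = u * dist (ℓ₁ t) (ℓ₂ t) := by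
      rw [dist_comm (ℓ₂ t) (ℓ₁ t)]; ring
    rw [harg, ← hlam_app t] at q
    have d1 : dist (ℓ₂ s) (ℓ₂ t) ^ 2 = (s - t) ^ 2 := by
      rw [line_dist h₂.1, sq_abs]
    have d2 : dist (ℓ₂ s) (ℓ₁ t) ^ 2 = (t - s) ^ 2 + e ^ 2 := by
      rw [dist_comm]; exact hpair t s
    have d3 : dist (ℓ₂ t) (ℓ₁ t) ^ 2 = e ^ 2 := by rw [dist_comm, het t]
    rw [d1, d2, d3] at q
    nlinarith [q]
  -- exact equalities along the diagonal
  have chain : ∀ s t₀ : ℝ,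
      dist (ℓ₁ s) (lam (s + u * (t₀ - s))) = u * Real.sqrt ((s - t₀) ^ 2 + e ^ 2) ∧
      dist (lam (s + u * (t₀ - s))) (ℓ₂ t₀) = (1 - u) * Real.sqrt ((s - t₀) ^ 2 + e ^ 2) := by
    intro s t₀
    have hM0 : 0 ≤ (s - t₀) ^ 2 + e ^ 2 := by positivity
    have hdA : dist (ℓ₁ s) (lam (s + u * (t₀ - s))) ≤
        u * Real.sqrt ((s - t₀) ^ 2 + e ^ 2) := by
      have h1 := F1 s (s + u * (t₀ - s))
      have h2 : (s - (s + u * (t₀ - s))) ^ 2 + (u * e) ^ 2 =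
          u ^ 2 * ((s - t₀) ^ 2 + e ^ 2) := by ring
      rw [h2] at h1
      calc dist (ℓ₁ s) (lam (s + u * (t₀ - s)))
          = Real.sqrt (dist (ℓ₁ s) (lam (s + u * (t₀ - s))) ^ 2) :=
            (Real.sqrt_sq dist_nonneg).symm
        _ ≤ Real.sqrt (u ^ 2 * ((s - t₀) ^ 2 + e ^ 2)) := Real.sqrt_le_sqrt h1
        _ = u * Real.sqrt ((s - t₀) ^ 2 + e ^ 2) := by
            rw [Real.sqrt_mul (sq_nonneg u), Real.sqrt_sq hu0]
    have hdB : dist (lam (s + u * (t₀ - s))) (ℓ₂ t₀) ≤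
        (1 - u) * Real.sqrt ((s - t₀) ^ 2 + e ^ 2) := by
      have h1 := F2 t₀ (s + u * (t₀ - s))
      have h2 : (t₀ - (s + u * (t₀ - s))) ^ 2 + ((1 - u) * e) ^ 2 =
          (1 - u) ^ 2 * ((s - t₀) ^ 2 + e ^ 2) := by ring
      rw [h2] at h1
      calc dist (lam (s + u * (t₀ - s))) (ℓ₂ t₀)
          = Real.sqrt (dist (ℓ₂ t₀) (lam (s + u * (t₀ - s))) ^ 2) := by
            rw [dist_comm]; exact (Real.sqrt_sq dist_nonneg).symm
        _ ≤ Real.sqrt ((1 - u) ^ 2 * ((s - t₀) ^ 2 + e ^ 2)) := Real.sqrt_le_sqrt h1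
        _ = (1 - u) * Real.sqrt ((s - t₀) ^ 2 + e ^ 2) := by
            rw [Real.sqrt_mul (sq_nonneg (1 - u)),
              Real.sqrt_sq (by linarith : (0:ℝ) ≤ 1 - u)]
    have htot : dist (ℓ₁ s) (ℓ₂ t₀) = Real.sqrt ((s - t₀) ^ 2 + e ^ 2) :=
      dist_eq_sqrt (hpair s t₀)
    have htri : Real.sqrt ((s - t₀) ^ 2 + e ^ 2) ≤
        dist (ℓ₁ s) (lam (s + u * (t₀ - s))) + dist (lam (s + u * (t₀ - s))) (ℓ₂ t₀) := by
      rw [← htot]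
      exact dist_triangle _ _ _
    constructor
    · linarith
    · linarith
  have F3 : ∀ s t, dist (ℓ₁ s) (lam t) = Real.sqrt ((s - t) ^ 2 + (u * e) ^ 2) := by
    intro s t
    have hune : u ≠ 0 := ne_of_gt hu0'
    have harg : s + u * (((t - s) / u + s) - s) = t := by
      field_simp
      ring
    have hc1 := (chain s ((t - s) / u + s)).1
    rw [harg] at hc1
    have hst : u * (s - ((t - s) / u + s)) = s - t := by
      field_simp; ring
    have h2 : (s - t) ^ 2 + (u * e) ^ 2 = u ^ 2 * ((s - ((t - s) / u + s)) ^ 2 + e ^ 2) := by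
      rw [← hst]; ring
    rw [hc1, h2, Real.sqrt_mul (sq_nonneg u), Real.sqrt_sq hu0]
  -- lam is a line
  have hlam_line : IsLine lam := by
    have hupper : ∀ s t, dist (lam s) (lam t) ≤ |s - t| := by
      intro s t
      have hj := jointConvex hC (hσ s) (hσ t) hu0 hu1
      rw [← hlam_app s, ← hlam_app t, line_dist h₁.1, line_dist h₂.1] at hj
      calc dist (lam s) (lam t) ≤ (1 - u) * |s - t| + u * |s - t| := hj
        _ = |s - t| := by ring
    have hlower : ∀ s t, s ≤ t → t - s ≤ dist (lam s) (lam t) := by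
      intro s t hst
      by_contra hcon
      push_neg at hcon
      obtain ⟨d, hddef⟩ : ∃ d, dist (lam s) (lam t) = d := ⟨_, rfl⟩
      rw [hddef] at hcon
      obtain ⟨a, hadef⟩ : ∃ a, (u * e) ^ 2 = a := ⟨_, rfl⟩
      have ha0 : 0 ≤ a := hadef ▸ sq_nonneg _
      obtain ⟨δ, hδdef⟩ : ∃ δ, t - s - d = δ := ⟨_, rfl⟩
      have hδ0 : 0 < δ := by rw [← hδdef]; linarith
      obtain ⟨s₀, hs₀def⟩ : ∃ s₀, s - a / (2 * δ) - 1 = s₀ := ⟨_, rfl⟩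
      have hss₀ : 0 < s - s₀ := by
        rw [← hs₀def]
        have : 0 ≤ a / (2 * δ) := by positivity
        linarith
      have h1 : t - s₀ ≤ dist (ℓ₁ s₀) (lam t) := by
        rw [F3 s₀ t, hadef, show (s₀ - t) ^ 2 + a = (t - s₀) ^ 2 + a by ring]
        exact le_sqrt_add_sq ha0
      have h2 : dist (ℓ₁ s₀) (lam s) ≤ (s - s₀) + a / (2 * (s - s₀)) := by
        rw [F3 s₀ s, hadef, show (s₀ - s) ^ 2 + a = (s - s₀) ^ 2 + a by ring]
        exact sqrt_add_sq_le hss₀ ha0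
      have htri := dist_triangle (ℓ₁ s₀) (lam s) (lam t)
      rw [hddef] at htri
      have hkey2 : δ ≤ a / (2 * (s - s₀)) := by
        rw [← hδdef]
        linarith
      have h3 : δ * (2 * (s - s₀)) ≤ a := (le_div_iff₀ (by linarith)).mp hkey2
      have hM : s - s₀ = a / (2 * δ) + 1 := by rw [← hs₀def]; ring
      rw [hM] at h3
      have h4 : δ * (2 * (a / (2 * δ) + 1)) = a + 2 * δ := by
        field_simp
      rw [h4] at h3
      linarith
    intro s _ t _
    rcases le_total s t with h | h
    · rw [abs_of_nonpos (by linarith : s - t ≤ 0)]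
      have ha := hlower s t h
      have hb := hupper s t
      rw [abs_of_nonpos (by linarith : s - t ≤ 0)] at hb
      linarith
    · rw [abs_of_nonneg (by linarith : 0 ≤ s - t)]
      have ha := hlower t s h
      have hb := hupper s t
      rw [abs_of_nonneg (by linarith : 0 ≤ s - t)] at hb
      rw [dist_comm] at ha
      linarith
  -- lam is boundedly close to c
  have hbdc : ∀ t, dist (lam t) (c t) ≤ u * e + |E₁| := by
    intro t
    have h1 : dist (ℓ₁ t) (lam t) = u * e := by
      rw [F3 t t, show (t - t) ^ 2 + (u * e) ^ 2 = (u * e) ^ 2 by ring,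
        Real.sqrt_sq (by positivity)]
    calc dist (lam t) (c t) ≤ dist (lam t) (ℓ₁ t) + dist (ℓ₁ t) (c t) := dist_triangle _ _ _
      _ = u * e + |E₁| := by rw [dist_comm (lam t) (ℓ₁ t), h1, sync_selfdist h₁ t]
  obtain ⟨aℓ, E, hE0, hsync⟩ := sync_of_bounded hC hcl hlam_line hbdc
  -- identify p with a point of lam
  have hLs : Real.sqrt ((τ₁ - τ₂) ^ 2 + e ^ 2) = L := by
    have := dist_eq_sqrt (show dist (ℓ₁ τ₁) (ℓ₂ τ₂) ^ 2 = (τ₁ - τ₂) ^ 2 + e ^ 2 by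
      rw [hLdef]; exact hL2)
    rw [hLdef] at this
    exact this.symm
  have hcq := chain τ₁ τ₂
  rw [hLs] at hcq
  have hq : dist (ℓ₁ τ₁) (lam (τ₁ + u * (τ₂ - τ₁))) +
      dist (lam (τ₁ + u * (τ₂ - τ₁))) (ℓ₂ τ₂) = dist (ℓ₁ τ₁) (ℓ₂ τ₂) := by
    rw [hcq.1, hcq.2, hLdef, ← hdxp, ← hdpy]
    exact hp
  have hp' : dist (ℓ₁ τ₁) p + dist p (ℓ₂ τ₂) = dist (ℓ₁ τ₁) (ℓ₂ τ₂) := by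
    rw [hLdef]; exact hp
  have hpq : p = lam (τ₁ + u * (τ₂ - τ₁)) :=
    unique_between hC hp' hq (by rw [hdxp, hcq.1])
  refine ⟨fun t => lam (t + aℓ), E, hsync, τ₁ + u * (τ₂ - τ₁) - aℓ, ?_⟩
  rw [hpq]
  show lam (τ₁ + u * (τ₂ - τ₁) - aℓ + aℓ) = lam (τ₁ + u * (τ₂ - τ₁))
  congr 1
  ring

lemma le_of_sq_le_sq {a b : ℝ} (h : a ^ 2 ≤ b ^ 2) (ha : 0 ≤ a) (hb : 0 ≤ b) : a ≤ b := by
  nlinarith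

set_option maxHeartbeats 2000000 in
lemma all_on_sync (hX : Hadamard X) (hgc : GeodesicallyComplete X) {c : ℝ → X}
    (hc : IsLine c) {R : ℝ} (hR : 0 < R)
    (hnbd : ∀ x : X, ∃ p : X, (∃ (ℓ : ℝ → X) (E τ : ℝ), Sync c ℓ E ∧ ℓ τ = p) ∧ dist x p ≤ R) :
    ∀ x : X, ∃ (ℓ : ℝ → X) (E τ : ℝ), Sync c ℓ E ∧ ℓ τ = x := by
  obtain ⟨hcomp, hC⟩ := hX
  haveI : CompleteSpace X := hcomp
  -- density step
  have hdense : ∀ (x : X) (ε : ℝ), 0 < ε →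
      ∃ q : X, (∃ (ℓ : ℝ → X) (E τ : ℝ), Sync c ℓ E ∧ ℓ τ = q) ∧ dist x q ≤ ε := by
    intro x ε hε
    obtain ⟨p, hpQ, hpd⟩ := hnbd x
    rcases eq_or_lt_of_le (dist_nonneg (x := p) (y := x)) with hr | hr
    · -- x = p
      have : p = x := by rw [← dist_eq_zero, ← hr]
      exact ⟨p, hpQ, by rw [dist_comm, ← hr]; linarith⟩
    obtain ⟨γ, hγ⟩ := hC.1 p x
    obtain ⟨lh, hlh, hEq⟩ := hgc γ 0 (dist p x) dist_nonneg hγ.2.2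
    have hlh0 : lh 0 = p := by
      rw [hEq (Set.mem_Icc.mpr ⟨le_refl 0, dist_nonneg⟩), hγ.1]
    have hlhr : lh (dist p x) = x := by
      rw [hEq (Set.mem_Icc.mpr ⟨dist_nonneg, le_refl _⟩), hγ.2.1]
    obtain ⟨T, hTdef⟩ : ∃ T : ℝ, max (dist p x) (dist p x * R / ε) + 1 = T := ⟨_, rfl⟩
    have hTr : dist p x < T := by
      rw [← hTdef]; linarith [le_max_left (dist p x) (dist p x * R / ε)]
    have hT0 : 0 < T := lt_of_le_of_lt dist_nonneg hTr
    have hTε : dist p x * R / ε < T := by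
      rw [← hTdef]; linarith [le_max_right (dist p x) (dist p x * R / ε)]
    obtain ⟨pT, hpTQ, hpTd⟩ := hnbd (lh T)
    obtain ⟨μ, hμ⟩ := hC.1 p pT
    obtain ⟨u, hudef⟩ : ∃ u : ℝ, dist p x / T = u := ⟨_, rfl⟩
    have hu0 : 0 ≤ u := hudef ▸ div_nonneg dist_nonneg hT0.le
    have hu1 : u ≤ 1 := by rw [← hudef, div_le_one hT0]; linarith
    -- the geodesic segment of lh from p to lh T
    have hseg := line_seg hlh 0 T
    rw [hlh0] at hseg
    have hsame := sameEnd hC hseg hμ hu0 hu1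
    have hdplhT : dist p (lh T) = T := by
      rw [← hlh0, line_dist hlh, zero_sub, abs_neg, abs_of_pos hT0]
    have hptfrac : lh (0 + dir 0 T * (u * dist p (lh T))) = x := by
      have h1 : dist p (lh T) = dist (lh 0) (lh T) := by rw [hlh0]
      rw [h1, line_seg_param hlh 0 T u]
      have h2 : 0 + u * (T - 0) = dist p x := by
        rw [← hudef]; field_simp; ring
      rw [h2, hlhr]
    rw [hptfrac] at hsame
    refine ⟨μ (u * dist p pT), ?_, ?_⟩
    · -- the point is between two synced points
      obtain ⟨ℓ₁, E₁, τ₁, hs₁, hv₁⟩ := hpQ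
      obtain ⟨ℓ₂, E₂, τ₂, hs₂, hv₂⟩ := hpTQ
      have hbetween : dist (ℓ₁ τ₁) (μ (u * dist p pT)) +
          dist (μ (u * dist p pT)) (ℓ₂ τ₂) = dist (ℓ₁ τ₁) (ℓ₂ τ₂) := by
        rw [hv₁, hv₂]
        have hmem1 : u * dist p pT ∈ Set.Icc 0 (dist p pT) :=
          ⟨mul_nonneg hu0 dist_nonneg, by nlinarith [dist_nonneg (x := p) (y := pT)]⟩
        have h1 : dist p (μ (u * dist p pT)) = u * dist p pT := by
          have := hμ.2.2 0 (Set.mem_Icc.mpr ⟨le_refl 0, dist_nonneg⟩) (u * dist p pT) hmem1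
          rw [hμ.1] at this
          rw [this, zero_sub, abs_neg, abs_of_nonneg (mul_nonneg hu0 dist_nonneg)]
        have h2 : dist (μ (u * dist p pT)) pT = (1 - u) * dist p pT := by
          have := hμ.2.2 (u * dist p pT) hmem1 (dist p pT)
            (Set.mem_Icc.mpr ⟨dist_nonneg, le_refl _⟩)
          rw [hμ.2.1] at this
          rw [this, abs_of_nonpos (by nlinarith [dist_nonneg (x := p) (y := pT)])]
          ring
        rw [h1, h2]
        ring
      obtain ⟨lam, E, hslam, v, hvlam⟩ := between_mem hC hc hs₁ hs₂ hbetween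
      exact ⟨lam, E, v, hslam, hvlam⟩
    · -- the distance bound
      calc dist x (μ (u * dist p pT)) ≤ u * dist (lh T) pT := hsame
        _ ≤ u * R := by
            apply mul_le_mul_of_nonneg_left _ hu0
            exact hpTd
        _ ≤ ε := by
            rw [← hudef]
            rw [div_mul_eq_mul_div, div_le_iff₀ hT0]
            have : dist p x * R / ε ≤ T := le_of_lt hTε
            rw [div_le_iff₀ hε] at this
            linarith
  -- limit step
  intro x
  have hseq : ∀ n : ℕ, ∃ q : X,
      (∃ (ℓ : ℝ → X) (E τ : ℝ), Sync c ℓ E ∧ ℓ τ = q) ∧ dist x q ≤ 1 / (n + 1) := by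
    intro n
    exact hdense x (1 / (n + 1)) (by positivity)
  choose q hqQ hqd using hseq
  choose ℓs Es τs hsync hval using hqQ
  have hqq : ∀ m n : ℕ, dist (q m) (q n) ≤ 1 / (m + 1) + 1 / (n + 1) := by
    intro m n
    calc dist (q m) (q n) ≤ dist (q m) x + dist x (q n) := dist_triangle _ _ _
      _ ≤ 1 / (m + 1) + 1 / (n + 1) := by
          rw [dist_comm (q m) x]
          exact add_le_add (hqd m) (hqd n)
  have hkey : ∀ (m n : ℕ) (s : ℝ), dist (ℓs m s) (ℓs n s) ≤ dist (q m) (q n) ∧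
      |τs m - τs n| ≤ dist (q m) (q n) := by
    intro m n s
    have hpair := sync_pair hC (hsync m) (hsync n)
    have h1 : dist (q m) (q n) ^ 2 = (τs m - τs n) ^ 2 + dist (ℓs m 0) (ℓs n 0) ^ 2 := by
      rw [← hval m, ← hval n]
      exact hpair (τs m) (τs n)
    have h2 : dist (ℓs m s) (ℓs n s) ^ 2 = dist (ℓs m 0) (ℓs n 0) ^ 2 := by
      rw [hpair s s]
      ring
    constructor
    · apply le_of_sq_le_sq _ dist_nonneg dist_nonneg
      rw [h2, h1]
      nlinarith [sq_nonneg (τs m - τs n)]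
    · apply le_of_sq_le_sq _ (abs_nonneg _) dist_nonneg
      rw [sq_abs, h1]
      nlinarith [sq_nonneg (dist (ℓs m 0) (ℓs n 0))]
  have hbnd : ∀ (N n : ℕ), N ≤ n → ∀ s, dist (ℓs n s) (ℓs N s) ≤ 2 / (N + 1) ∧
      |τs n - τs N| ≤ 2 / (N + 1) := by
    intro N n hNn s
    have h1 : 1 / ((n:ℝ) + 1) ≤ 1 / (N + 1) := by
      apply div_le_div_of_nonneg_left (by norm_num) (by positivity)
      exact_mod_cast by omega
    have h2 := hqq n N
    have h3 := (hkey n N s).1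
    have h4 := (hkey n N s).2
    constructor
    · calc dist (ℓs n s) (ℓs N s) ≤ dist (q n) (q N) := h3
        _ ≤ 1 / (n + 1) + 1 / (N + 1) := h2
        _ ≤ 2 / (N + 1) := by rw [show (2:ℝ) / (N+1) = 1/(N+1) + 1/(N+1) by ring]; linarith
    · calc |τs n - τs N| ≤ dist (q n) (q N) := h4
        _ ≤ 1 / (n + 1) + 1 / (N + 1) := h2
        _ ≤ 2 / (N + 1) := by rw [show (2:ℝ) / (N+1) = 1/(N+1) + 1/(N+1) by ring]; linarith
  have htwo : Filter.Tendsto (fun N : ℕ => 2 / ((N:ℝ) + 1)) Filter.atTop (nhds 0) := by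
    have h := tendsto_one_div_add_atTop_nhds_zero_nat.const_mul (2:ℝ)
    simp only [mul_one_div] at h
    simpa using h
  have hcauchy : ∀ s : ℝ, CauchySeq (fun n => ℓs n s) := by
    intro s
    apply cauchySeq_of_le_tendsto_0' (fun N : ℕ => 2 / ((N:ℝ) + 1)) _ htwo
    intro N n hNn
    rw [dist_comm]
    exact (hbnd N n hNn s).1
  have hτcauchy : CauchySeq τs := by
    apply cauchySeq_of_le_tendsto_0' (fun N : ℕ => 2 / ((N:ℝ) + 1)) _ htwo
    intro N n hNn
    rw [Real.dist_eq, abs_sub_comm]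
    exact (hbnd N n hNn 0).2
  have hlimex : ∀ s : ℝ, ∃ y : X, Filter.Tendsto (fun n => ℓs n s) Filter.atTop (nhds y) :=
    fun s => cauchySeq_tendsto_of_complete (hcauchy s)
  choose ll hll using hlimex
  obtain ⟨τ, hτ⟩ := cauchySeq_tendsto_of_complete hτcauchy
  have hll_line : IsLine ll := by
    intro s _ t _
    have h1 : Filter.Tendsto (fun n => dist (ℓs n s) (ℓs n t)) Filter.atTop
        (nhds (dist (ll s) (ll t))) := (hll s).dist (hll t)
    have h2 : (fun n => dist (ℓs n s) (ℓs n t)) = fun _ => |s - t| := by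
      funext n
      exact line_dist (hsync n).1 s t
    rw [h2] at h1
    exact tendsto_nhds_unique h1 tendsto_const_nhds
  have hll_sync : Sync c ll (dist (ll 0) (c 0)) := by
    refine ⟨hll_line, ?_⟩
    intro s t
    have h1 : Filter.Tendsto (fun n => dist (ℓs n s) (c t) ^ 2) Filter.atTop
        (nhds (dist (ll s) (c t) ^ 2)) := ((hll s).dist tendsto_const_nhds).pow 2
    have h2 : Filter.Tendsto (fun n => dist (ℓs n 0) (c 0) ^ 2) Filter.atTop
        (nhds (dist (ll 0) (c 0) ^ 2)) := ((hll 0).dist tendsto_const_nhds).pow 2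
    have h3 : (fun n => dist (ℓs n s) (c t) ^ 2 - dist (ℓs n 0) (c 0) ^ 2) =
        fun _ => (s - t) ^ 2 := by
      funext n
      rw [(hsync n).2 s t, (hsync n).2 0 0]
      ring
    have h4 := h1.sub h2
    rw [h3] at h4
    have h5 := tendsto_nhds_unique h4 tendsto_const_nhds
    linarith [h5]
  refine ⟨ll, dist (ll 0) (c 0), τ, hll_sync, ?_⟩
  have hbound : ∀ n : ℕ, dist (ll τ) x ≤
      dist (ll τ) (ℓs n τ) + |τs n - τ| + 1 / (n + 1) := by
    intro n
    calc dist (ll τ) x ≤ dist (ll τ) (ℓs n τ) + dist (ℓs n τ) (ℓs n (τs n)) +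
          dist (ℓs n (τs n)) x := dist_triangle4 _ _ _ _
      _ ≤ dist (ll τ) (ℓs n τ) + |τs n - τ| + 1 / (n + 1) := by
          have e1 : dist (ℓs n τ) (ℓs n (τs n)) = |τ - τs n| := line_dist (hsync n).1 _ _
          have e2 : dist (ℓs n (τs n)) x ≤ 1 / (n + 1) := by
            rw [hval n, dist_comm]
            exact hqd n
          rw [e1, abs_sub_comm]
          linarith
  have hz : Filter.Tendsto (fun n : ℕ => dist (ll τ) (ℓs n τ) + |τs n - τ| + 1 / ((n:ℝ) + 1))
      Filter.atTop (nhds 0) := by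
    have t1 : Filter.Tendsto (fun n : ℕ => dist (ll τ) (ℓs n τ)) Filter.atTop (nhds 0) := by
      have := (tendsto_const_nhds (x := ll τ) (f := Filter.atTop (α := ℕ))).dist (hll τ)
      simpa using this
    have t2 : Filter.Tendsto (fun n : ℕ => |τs n - τ|) Filter.atTop (nhds 0) := by
      have h := hτ.sub (tendsto_const_nhds (x := τ) (f := Filter.atTop (α := ℕ)))
      rw [sub_self] at h
      have := h.abs
      simpa using this
    have t3 : Filter.Tendsto (fun n : ℕ => 1 / ((n:ℝ) + 1)) Filter.atTop (nhds 0) :=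
      tendsto_one_div_add_atTop_nhds_zero_nat
    have := (t1.add t2).add t3
    simpa using this
  have hd0 : dist (ll τ) x ≤ 0 := ge_of_tendsto hz (Filter.Eventually.of_forall hbound)
  have : dist (ll τ) x = 0 := le_antisymm hd0 dist_nonneg
  rwa [dist_eq_zero] at this

lemma final_dist (hC : CAT0 X) {c : ℝ → X}
    (a b : {x : X | ∃ (ℓ : ℝ → X) (E : ℝ), Sync c ℓ E ∧ ℓ 0 = x}) (s t : ℝ) :
    dist (Classical.choose a.2 s) (Classical.choose b.2 t) ^ 2 =
      (s - t) ^ 2 + dist (a : X) (b : X) ^ 2 := by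
  obtain ⟨Ea, hsa, ha0⟩ := Classical.choose_spec a.2
  obtain ⟨Eb, hsb, hb0⟩ := Classical.choose_spec b.2
  rw [sync_pair hC hsa hsb s t, ha0, hb0]

end Strip

open Strip in
set_option maxHeartbeats 1000000 in
/-- Let `X` be a geodesically complete Hadamard space, `c` a geodesic line,
`P` the union of all geodesic lines parallel to `c` (a nonempty closed convex set), and
suppose `X` is contained in the `R`-neighborhood of `P` for some `R > 0`. Then `X = P`,
and consequently `X` splits isometrically as `ℝ × X′`. -/
theorem eq_parallel_set_and_splits {X : Type*} [MetricSpace X] (hX : Hadamard X)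
    (hgc : GeodesicallyComplete X) (c : ℝ → X) (hc : IsLine c) (P : Set X)
    (hP : P = {x : X | ∃ ℓ : ℝ → X, IsLine ℓ ∧
        EMetric.hausdorffEdist (Set.range ℓ) (Set.range c) ≠ ⊤ ∧ x ∈ Set.range ℓ})
    (R : ℝ) (hR : 0 < R) (hnbd : ∀ x : X, ∃ p ∈ P, dist x p ≤ R) :
    P = Set.univ ∧
    ∃ (X' : Set X) (φ : ℝ → X' → X),
      Function.Bijective (fun pr : ℝ × X' => φ pr.1 pr.2) ∧
      ∀ (s t : ℝ) (a b : X'),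
        dist (φ s a) (φ t b) ^ 2 = (s - t) ^ 2 + dist (a : X) (b : X) ^ 2 := by
  obtain ⟨hcomp, hC⟩ := hX
  have hnbd' : ∀ x : X, ∃ p : X,
      (∃ (ℓ : ℝ → X) (E τ : ℝ), Sync c ℓ E ∧ ℓ τ = p) ∧ dist x p ≤ R := by
    intro x
    obtain ⟨p, hpP, hpd⟩ := hnbd x
    rw [hP] at hpP
    obtain ⟨ℓ, hline, hpar, ⟨tp, htp⟩⟩ := hpP
    obtain ⟨ℓ', E, hE, hsync, hrange⟩ := sync_of_parallel hC hc hline hpar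
    obtain ⟨v, hv⟩ := hrange tp
    exact ⟨p, ⟨ℓ', E, v, hsync, by rw [hv, htp]⟩, hpd⟩
  have main := all_on_sync ⟨hcomp, hC⟩ hgc hc hR hnbd'
  constructor
  · -- P = univ
    rw [hP]
    apply Set.eq_univ_of_forall
    intro x
    obtain ⟨ℓ, E, τ, hs, hτ⟩ := main x
    refine ⟨ℓ, hs.1, ?_, ⟨τ, hτ⟩⟩
    have hbd : EMetric.hausdorffEdist (Set.range ℓ) (Set.range c) ≤ ENNReal.ofReal |E| := by
      apply EMetric.hausdorffEdist_le_of_mem_edist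
      · rintro _ ⟨s, rfl⟩
        refine ⟨c s, Set.mem_range_self s, ?_⟩
        rw [edist_dist, sync_selfdist hs s]
      · rintro _ ⟨t, rfl⟩
        refine ⟨ℓ t, Set.mem_range_self t, ?_⟩
        rw [edist_dist, dist_comm, sync_selfdist hs t]
    exact ne_top_of_le_ne_top ENNReal.ofReal_ne_top hbd
  · -- splitting
    refine ⟨{x : X | ∃ (ℓ : ℝ → X) (E : ℝ), Sync c ℓ E ∧ ℓ 0 = x},
      fun t a => Classical.choose a.2 t, ⟨?_, ?_⟩, ?_⟩
    · -- injective
      rintro ⟨s, a⟩ ⟨t, b⟩ h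
      simp only [] at h
      have hd := final_dist hC a b s t
      rw [h, dist_self] at hd
      have h1 : (s - t) ^ 2 = 0 := by
        nlinarith [sq_nonneg (s - t), sq_nonneg (dist (a : X) (b : X))]
      have h2 : dist (a : X) (b : X) = 0 := by
        nlinarith [sq_nonneg (s - t), dist_nonneg (x := (a : X)) (y := (b : X))]
      have hst : s = t := by
        have := pow_eq_zero_iff (n := 2) (by norm_num) |>.mp h1
        linarith [sub_eq_zero.mp this]
      have hab : a = b := Subtype.ext (dist_eq_zero.mp h2)
      rw [hst, hab]
    · -- surjective
      intro x
      obtain ⟨ℓ, E, τ, hs, hτ⟩ := main x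
      refine ⟨(τ, ⟨ℓ 0, ⟨ℓ, E, hs, rfl⟩⟩), ?_⟩
      simp only []
      obtain ⟨Ea, hsa, ha0⟩ :=
        Classical.choose_spec (⟨ℓ 0, ⟨ℓ, E, hs, rfl⟩⟩ :
          {x : X | ∃ (ℓ : ℝ → X) (E : ℝ), Sync c ℓ E ∧ ℓ 0 = x}).2
      have h := sync_pair hC hsa hs τ τ
      rw [ha0] at h
      simp only [dist_self, sub_self] at h
      have h2 : dist (Classical.choose (⟨ℓ 0, ⟨ℓ, E, hs, rfl⟩⟩ :
          {x : X | ∃ (ℓ : ℝ → X) (E : ℝ), Sync c ℓ E ∧ ℓ 0 = x}).2 τ) (ℓ τ) = 0 := by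
        nlinarith [h, dist_nonneg (x := Classical.choose (⟨ℓ 0, ⟨ℓ, E, hs, rfl⟩⟩ :
          {x : X | ∃ (ℓ : ℝ → X) (E : ℝ), Sync c ℓ E ∧ ℓ 0 = x}).2 τ) (y := ℓ τ)]
      rw [dist_eq_zero] at h2
      rw [h2, hτ]
    · -- distance formula
      intro s t a b
      exact final_dist hC a b s t
end
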